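/- arXiv:2312.06370 — 6 statements merged into one kernel-verified Lean document; each statement's English description precedes it below -/
import Mathlib

section
/- For integers 1 ≤ k ≤ m ≤ n with k ≤ n, the ratio binom(m,k)/binom(n,k) is at least 1 - k(n-m)/(n-k+1). -/
/-!
Writing `binom(m,k)/binom(n,k) = ∏_{i<k} (m-i)/(n-i)`, each factor equals `1 - (n-m)/(n-i)` with
`n - i ≥ n - k + 1`, so it is at least `1 - x` for `x = (n-m)/(n-k+1) ∈ [0,1]`; Bernoulli's
inequality then bounds the product `≥ (1-x)^k` below by `1 - k x`.
-/

open Finset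

-- Holds for `k > n` too: then both sides are `0`, the factor `j = n` being a division by zero.
theorem Nat.cast_choose_div_cast_choose {K : Type*} [Field K] [CharZero K] (m n k : ℕ) :
    (m.choose k : K) / n.choose k = ∏ j ∈ range k, ((m : K) - j) / ((n : K) - j) := by
  simp only [Nat.cast_choose_eq_descPochhammer_div, descPochhammer_eval_eq_prod_range,
    prod_div_distrib]
  exact div_div_div_cancel_right₀ (Nat.cast_ne_zero.2 k.factorial_ne_zero) _ _

section LinearOrderedField

variable {K : Type*} [Field K] [LinearOrder K] [IsStrictOrderedRing K]

theorem one_sub_card_mul_le_prod {ι : Type*} {s : Finset ι} {f : ι → K} {x : K} (hx : x ≤ 1)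
    (hf : ∀ i ∈ s, 1 - x ≤ f i) : 1 - #s * x ≤ ∏ i ∈ s, f i :=
  calc 1 - #s * x = 1 + #s * -x := by ring
    _ ≤ (1 + -x) ^ #s := one_add_mul_le_pow (by linarith) _
    _ = ∏ _i ∈ s, (1 - x) := by rw [prod_const, sub_eq_add_neg]
    _ ≤ ∏ i ∈ s, f i := prod_le_prod (fun _ _ => by linarith) hf

theorem one_sub_div_le_sub_div_sub {a b c t : K} (hab : a ≤ b) (hc : 0 < c) (hcb : c ≤ b - t) :
    1 - (b - a) / c ≤ (a - t) / (b - t) :=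
  calc 1 - (b - a) / c ≤ 1 - (b - a) / (b - t) := by gcongr
    _ = (a - t) / (b - t) := by
        field_simp [(hc.trans_le hcb).ne']
        ring

end LinearOrderedField

theorem stmt_1_general (n m k : ℕ) (hkm : k ≤ m) (hmn : m ≤ n) :
    (m.choose k : ℝ) / (n.choose k : ℝ)
      ≥ 1 - (k : ℝ) * ((n : ℝ) - m) / ((n : ℝ) - k + 1) := by
  have hkm' : (k : ℝ) ≤ m := by exact_mod_cast hkm
  have hmn' : (m : ℝ) ≤ n := by exact_mod_cast hmn
  have hden : (0 : ℝ) < n - k + 1 := by linarith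
  have hx : ((n : ℝ) - m) / (n - k + 1) ≤ 1 := by
    rw [div_le_one hden]
    linarith
  have hfactor : ∀ i ∈ range k,
      1 - ((n : ℝ) - m) / (n - k + 1) ≤ ((m : ℝ) - i) / ((n : ℝ) - i) := by
    intro i hi
    have hik : (i : ℝ) + 1 ≤ k := by exact_mod_cast mem_range.mp hi
    exact one_sub_div_le_sub_div_sub hmn' hden (by linarith)
  rw [ge_iff_le, Nat.cast_choose_div_cast_choose, mul_div_assoc]
  simpa only [card_range] using one_sub_card_mul_le_prod hx hfactor

theorem stmt_1 (n m k : ℕ) (hk : 1 ≤ k) (hkm : k ≤ m) (hmn : m ≤ n) :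
    (m.choose k : ℝ) / (n.choose k : ℝ)
      ≥ 1 - (k : ℝ) * ((n : ℝ) - m) / ((n : ℝ) - k + 1) :=
  stmt_1_general n m k hkm hmn
end

section
/- Let G be a biregular bipartite graph with parts U, V of degrees d_U, d_V respectively and at least one edge, with largest and second-largest singular values σ₁ ≥ σ₂. Then for all X ⊆ U and Y ⊆ V with densities α = |X|/|U| and β = |Y|/|V|, we have |e(X,Y) - α·β·e(U,V)| ≤ σ₂ · √(α(1-α)β(1-β)·|U|·|V|), where e(X,Y) is the number of edges between X and Y. -/
open Finset

/-- Expander Mixing Lemma for biregular bipartite graphs. The second-largest singular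
value `σ₂` of the bipartite adjacency matrix is characterized as the operator norm of the
matrix restricted to the orthogonal complement of the top singular vector `1_V`
(the hypothesis `hσ₂top` states that `σ₂` is attained there, and `hσ₂` that it bounds
the action on that complement). -/
theorem stmt_5 {U V : Type*} [Fintype U] [Fintype V] [Nonempty U] [Nonempty V]
    (r : U → V → Prop) [∀ u v, Decidable (r u v)] (dU dV : ℕ) (hdU : 1 ≤ dU) (hdV : 1 ≤ dV)
    (hU : ∀ u : U, (Finset.univ.filter (fun v => r u v)).card = dU)
    (hV : ∀ v : V, (Finset.univ.filter (fun u => r u v)).card = dV)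
    (σ₂ : ℝ) (hσ₂nonneg : 0 ≤ σ₂)
    (hσ₂ : ∀ x : V → ℝ, ∑ v, x v = 0 →
      ∑ u, (∑ v, (if r u v then x v else 0)) ^ 2 ≤ σ₂ ^ 2 * ∑ v, (x v) ^ 2)
    (hσ₂top : ∃ x : V → ℝ, (∑ v, x v = 0) ∧ x ≠ 0 ∧
      ∑ u, (∑ v, (if r u v then x v else 0)) ^ 2 = σ₂ ^ 2 * ∑ v, (x v) ^ 2)
    (X : Finset U) (Y : Finset V) (α β : ℝ)
    (hα : α = (X.card : ℝ) / (Fintype.card U : ℝ))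
    (hβ : β = (Y.card : ℝ) / (Fintype.card V : ℝ)) :
    |(((X ×ˢ Y).filter (fun p => r p.1 p.2)).card : ℝ)
        - α * β * ((Fintype.card U : ℝ) * dU)|
      ≤ σ₂ * Real.sqrt (α * (1 - α) * β * (1 - β) * (Fintype.card U) * (Fintype.card V)) := by
  classical
  have hm : (0:ℝ) < Fintype.card U := by exact_mod_cast Fintype.card_pos
  have hn : (0:ℝ) < Fintype.card V := by exact_mod_cast Fintype.card_pos
  set x : V → ℝ := fun v => (if v ∈ Y then 1 else 0) - β with hxdef
  set y : U → ℝ := fun u => (if u ∈ X then 1 else 0) - α with hydef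
  have hαm : α * (Fintype.card U : ℝ) = X.card := by
    rw [hα]; field_simp
  have hβn : β * (Fintype.card V : ℝ) = Y.card := by
    rw [hβ]; field_simp
  have hsumx : ∑ v, x v = 0 := by
    simp only [hxdef, Finset.sum_sub_distrib, Finset.sum_boole, Finset.sum_const,
      Finset.card_univ, nsmul_eq_mul, mul_one, Finset.filter_mem_eq_inter,
      Finset.univ_inter]
    linarith [hβn]
  -- double counting edges
  have hcount : (Fintype.card U : ℕ) * dU = Fintype.card V * dV := by
    have h1 : ∑ u : U, ∑ v : V, (if r u v then 1 else 0)
        = ∑ v : V, ∑ u : U, (if r u v then (1:ℕ) else 0) := Finset.sum_comm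
    simp only [← Finset.card_filter] at h1
    simp only [hU, hV, Finset.sum_const, Finset.card_univ, smul_eq_mul, mul_one] at h1
    simpa [mul_comm] using h1
  have hcountR : (Fintype.card U : ℝ) * dU = (Fintype.card V : ℝ) * dV := by
    exact_mod_cast hcount
  -- sums of indicators of edges
  have hrowR : ∀ u : U, ∑ v : V, (if r u v then (1:ℝ) else 0) = dU := by
    intro u
    rw [Finset.sum_boole, hU u]
  have hcolR : ∀ v : V, ∑ u : U, (if r u v then (1:ℝ) else 0) = dV := by
    intro v
    rw [Finset.sum_boole, hV v]
  -- key identity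
  have key : ∑ u, y u * (∑ v, (if r u v then x v else 0)) =
      (((X ×ˢ Y).filter (fun p => r p.1 p.2)).card : ℝ)
        - α * β * ((Fintype.card U : ℝ) * dU) := by
    have expand : ∀ u v, y u * (if r u v then x v else 0) =
        (if u ∈ X then (1:ℝ) else 0) * (if v ∈ Y then (1:ℝ) else 0) * (if r u v then 1 else 0)
        - β * ((if u ∈ X then 1 else 0) * (if r u v then 1 else 0))
        - α * ((if v ∈ Y then 1 else 0) * (if r u v then 1 else 0))
        + α * β * (if r u v then 1 else 0) := by
      intro u v
      by_cases hr : r u v <;> by_cases hu : u ∈ X <;> by_cases hv : v ∈ Y <;>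
        simp [hxdef, hydef, hr, hu, hv] <;> ring
    have lhs_eq : ∑ u, y u * (∑ v, (if r u v then x v else 0))
        = ∑ u, ∑ v, y u * (if r u v then x v else 0) := by
      simp [Finset.mul_sum]
    rw [lhs_eq]
    simp only [expand]
    simp only [Finset.sum_add_distrib, Finset.sum_sub_distrib, ← Finset.mul_sum]
    have P1 : ∑ u : U, ∑ v : V,
        (if u ∈ X then (1:ℝ) else 0) * (if v ∈ Y then (1:ℝ) else 0) * (if r u v then 1 else 0)
        = (((X ×ˢ Y).filter (fun p => r p.1 p.2)).card : ℝ) := by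
      rw [Finset.card_filter, Finset.sum_product]
      push_cast
      rw [← Finset.sum_subset (Finset.subset_univ X)]
      · refine Finset.sum_congr rfl fun u hu => ?_
        rw [← Finset.sum_subset (Finset.subset_univ Y)]
        · refine Finset.sum_congr rfl fun v hv => by simp [hu, hv]
        · intro v _ hv; simp [hv]
      · intro u _ hu
        simp [hu]
    have P2 : ∑ u : U,
        (if u ∈ X then (1:ℝ) else 0) * (∑ v : V, if r u v then (1:ℝ) else 0)
        = (X.card : ℝ) * dU := by
      simp only [hrowR, ← Finset.sum_mul, Finset.sum_boole, Finset.filter_mem_eq_inter,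
        Finset.univ_inter]
    have P3 : ∑ u : U, ∑ v : V,
        (if v ∈ Y then (1:ℝ) else 0) * (if r u v then 1 else 0) = (Y.card : ℝ) * dV := by
      rw [Finset.sum_comm]
      have : ∀ v : V, ∑ u : U, (if v ∈ Y then (1:ℝ) else 0) * (if r u v then 1 else 0)
          = (if v ∈ Y then (1:ℝ) else 0) * dV := by
        intro v; rw [← Finset.mul_sum, hcolR v]
      simp only [this, ← Finset.sum_mul, Finset.sum_boole, Finset.filter_mem_eq_inter,
        Finset.univ_inter]
    have P4 : ∑ u : U, ∑ v : V, (if r u v then (1:ℝ) else 0)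
        = (Fintype.card U : ℝ) * dU := by
      simp only [hrowR, Finset.sum_const, Finset.card_univ, nsmul_eq_mul]
    rw [P1, P2, P3, P4]
    linear_combination (β*(dU:ℝ))*hαm + (α*(dV:ℝ))*hβn + α*β*hcountR
  -- squared norms
  have hy2 : ∑ u, y u ^ 2 = α * (1 - α) * (Fintype.card U : ℝ) := by
    have h : ∀ u : U, y u ^ 2 = (if u ∈ X then (1:ℝ) else 0) * (1 - 2*α) + α ^ 2 := by
      intro u; by_cases hu : u ∈ X <;> simp [hydef, hu] <;> ring
    simp only [h, Finset.sum_add_distrib, ← Finset.sum_mul, Finset.sum_boole,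
      Finset.filter_mem_eq_inter, Finset.univ_inter, Finset.sum_const,
      Finset.card_univ, nsmul_eq_mul]
    linear_combination (2*α-1)*hαm
  have hx2 : ∑ v, x v ^ 2 = β * (1 - β) * (Fintype.card V : ℝ) := by
    have h : ∀ v : V, x v ^ 2 = (if v ∈ Y then (1:ℝ) else 0) * (1 - 2*β) + β ^ 2 := by
      intro v; by_cases hv : v ∈ Y <;> simp [hxdef, hv] <;> ring
    simp only [h, Finset.sum_add_distrib, ← Finset.sum_mul, Finset.sum_boole,
      Finset.filter_mem_eq_inter, Finset.univ_inter, Finset.sum_const,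
      Finset.card_univ, nsmul_eq_mul]
    linear_combination (2*β-1)*hβn
  -- Cauchy–Schwarz
  set S : ℝ := ∑ u, y u * (∑ v, (if r u v then x v else 0)) with hS
  have hCS : S ^ 2 ≤ (∑ u, y u ^ 2) * ∑ u, (∑ v, (if r u v then x v else 0)) ^ 2 := by
    exact Finset.sum_mul_sq_le_sq_mul_sq Finset.univ _ _
  have hop := hσ₂ x hsumx
  have hynn : (0:ℝ) ≤ ∑ u, y u ^ 2 := Finset.sum_nonneg fun u _ => sq_nonneg _
  have hxnn : (0:ℝ) ≤ ∑ v, x v ^ 2 := Finset.sum_nonneg fun v _ => sq_nonneg _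
  have hS2 : S ^ 2 ≤ σ₂ ^ 2 *
      (α * (1 - α) * β * (1 - β) * (Fintype.card U : ℝ) * (Fintype.card V : ℝ)) := by
    have h1 : S ^ 2 ≤ (∑ u, y u ^ 2) * (σ₂ ^ 2 * ∑ v, x v ^ 2) := by
      refine hCS.trans ?_
      exact mul_le_mul_of_nonneg_left hop hynn
    calc S ^ 2 ≤ (∑ u, y u ^ 2) * (σ₂ ^ 2 * ∑ v, x v ^ 2) := h1
      _ = σ₂ ^ 2 * (α * (1 - α) * β * (1 - β) * (Fintype.card U : ℝ) * (Fintype.card V : ℝ)) := by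
          rw [hy2, hx2]; ring
  have hargnn : (0:ℝ) ≤ α * (1 - α) * β * (1 - β) * (Fintype.card U : ℝ) * (Fintype.card V : ℝ) := by
    have : α * (1 - α) * β * (1 - β) * (Fintype.card U : ℝ) * (Fintype.card V : ℝ)
        = (α * (1 - α) * (Fintype.card U : ℝ)) * (β * (1 - β) * (Fintype.card V : ℝ)) := by ring
    rw [this, ← hy2, ← hx2]
    exact mul_nonneg hynn hxnn
  rw [← key, ← Real.sqrt_sq_eq_abs]
  calc Real.sqrt (S ^ 2)
      ≤ Real.sqrt (σ₂ ^ 2 *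
        (α * (1 - α) * β * (1 - β) * (Fintype.card U : ℝ) * (Fintype.card V : ℝ))) :=
        Real.sqrt_le_sqrt hS2
    _ = σ₂ * Real.sqrt (α * (1 - α) * β * (1 - β) * (Fintype.card U : ℝ) * (Fintype.card V : ℝ)) := by
        rw [Real.sqrt_mul (sq_nonneg σ₂), Real.sqrt_sq hσ₂nonneg]
end

section
/- Let G be a biregular bipartite graph with parts U, V of degrees d_U, d_V and at least one edge, with singular values σ₁ ≥ σ₂. For X ⊆ U nonempty with density α = |X|/|U| and Y ⊆ V with density β = |Y|/|V|, the maximum degree of the subgraph of G induced on X ∪ Y is at least d_U · (β - (σ₂/σ₁)·√(β/α)). -/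
/-!
Apply the `σ₂`-bound to the centred indicator `1_Y - β` of `Y`, which has mean zero and squared
norm at most `|Y|`: its image is the vector of discrepancies `e(u, Y) - β·dU`, so their
squares sum to at most `σ₂²|Y|`. By Cauchy–Schwarz over `X`, the average of `e(u, Y)` over
`u ∈ X` is at least `β·dU - σ₂·√(|Y|/|X|)`, and double counting (`|U|·dU = |V|·dV`) turns
`√(|Y|/|X|)` into `(dU/σ₁)·√(β/α)`.
-/

open Finset

theorem Finset.exists_sub_sqrt_le_of_sum_sq_sub_le {ι : Type*} {s : Finset ι} (hs : s.Nonempty)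
    {f : ι → ℝ} {c B : ℝ} (h : ∑ i ∈ s, (f i - c) ^ 2 ≤ B) :
    ∃ i ∈ s, c - √(B / #s) ≤ f i := by
  have hk : (0 : ℝ) < #s := by exact_mod_cast hs.card_pos
  have hB : 0 ≤ B := (sum_nonneg fun i _ => sq_nonneg _).trans h
  have hdev : -(#s * √(B / #s)) ≤ ∑ i ∈ s, (f i - c) := by
    refine (abs_le_of_sq_le_sq' ?_ (by positivity)).1
    calc (∑ i ∈ s, (f i - c)) ^ 2 ≤ #s * ∑ i ∈ s, (f i - c) ^ 2 :=
          sq_sum_le_card_mul_sum_sq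
      _ ≤ #s * B := by gcongr
      _ = (#s * √(B / #s)) ^ 2 := by rw [mul_pow, Real.sq_sqrt (by positivity)]; field_simp
  refine exists_le_of_sum_le hs ?_
  simp only [sum_sub_distrib, sum_const, nsmul_eq_mul] at hdev ⊢
  linarith

section CentredIndicator

variable {U V : Type*} [Fintype V] [DecidableEq V]

noncomputable def centredIndicator (Y : Finset V) (v : V) : ℝ :=
  (if v ∈ Y then 1 else 0) - #Y / Fintype.card V

theorem sum_centredIndicator (Y : Finset V) : ∑ v, centredIndicator Y v = 0 := by
  have hY : (Fintype.card V : ℝ) = 0 → (#Y : ℝ) = 0 := by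
    intro h
    exact_mod_cast Nat.eq_zero_of_le_zero ((card_le_univ Y).trans (by exact_mod_cast h.le))
  simp only [centredIndicator, sum_sub_distrib, sum_boole, sum_const, card_univ, nsmul_eq_mul,
    filter_mem_eq_inter, univ_inter]
  rw [mul_comm, div_mul_cancel_of_imp hY, sub_self]

theorem sum_sq_centredIndicator_le (Y : Finset V) : ∑ v, centredIndicator Y v ^ 2 ≤ #Y := by
  set β : ℝ := #Y / Fintype.card V
  have hsq : ∀ v, centredIndicator Y v ^ 2 =
      (if v ∈ Y then 1 - β else 0) - β * centredIndicator Y v := by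
    intro v
    simp only [centredIndicator]
    split_ifs <;> ring
  have hβ : 0 ≤ β := by positivity
  simp only [hsq, sum_sub_distrib, ← mul_sum, sum_centredIndicator, sum_ite_mem, univ_inter,
    sum_const, nsmul_eq_mul]
  nlinarith [Nat.cast_nonneg (α := ℝ) #Y]

theorem sum_ite_centredIndicator (r : U → V → Prop) [∀ u v, Decidable (r u v)] (Y : Finset V)
    (u : U) :
    ∑ v, (if r u v then centredIndicator Y v else 0) =
      #{v ∈ Y | r u v} - #Y / Fintype.card V * #{v | r u v} := by
  have hfilter : ({v ∈ {v | r u v} | v ∈ Y} : Finset V) = {v ∈ Y | r u v} := by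
    ext v
    simp [and_comm]
  simp only [centredIndicator]
  rw [← sum_filter, sum_sub_distrib, sum_boole, hfilter, sum_const, nsmul_eq_mul, mul_comm]

theorem sum_sq_card_filter_sub_le [Fintype U] (r : U → V → Prop) [∀ u v, Decidable (r u v)]
    {σ : ℝ} (hσ : ∀ x : V → ℝ, ∑ v, x v = 0 →
      ∑ u, (∑ v, (if r u v then x v else 0)) ^ 2 ≤ σ ^ 2 * ∑ v, (x v) ^ 2)
    (Y : Finset V) :
    ∑ u, ((#{v ∈ Y | r u v} : ℝ) - #Y / Fintype.card V * #{v | r u v}) ^ 2 ≤ σ ^ 2 * #Y :=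
  calc _ = ∑ u, (∑ v, if r u v then centredIndicator Y v else 0) ^ 2 := by
        simp only [sum_ite_centredIndicator]
    _ ≤ σ ^ 2 * ∑ v, centredIndicator Y v ^ 2 := hσ _ (sum_centredIndicator Y)
    _ ≤ σ ^ 2 * #Y := by gcongr; exact sum_sq_centredIndicator_le Y

end CentredIndicator

theorem div_sqrt_mul_mul_sqrt_density_ratio {m n dU dV : ℕ} (h : m * dU = n * dV) (hm : 0 < m)
    (hdU : 0 < dU) (y x : ℝ) :
    dU / √(dU * dV) * √(y / n / (x / m)) = √(y / x) := by
  have hn : 0 < n := Nat.pos_of_mul_pos_right (h ▸ Nat.mul_pos hm hdU)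
  have hdV : 0 < dV := Nat.pos_of_mul_pos_left (h ▸ Nat.mul_pos hm hdU)
  have hR : (m : ℝ) * dU = n * dV := by exact_mod_cast h
  have hdeg : (dU : ℝ) / √(dU * dV) = √(n / m) := by
    rw [eq_comm, Real.sqrt_eq_iff_eq_sq (by positivity) (by positivity), div_pow,
      Real.sq_sqrt (by positivity)]
    field_simp
    linear_combination -hR
  rw [hdeg, ← Real.sqrt_mul (by positivity)]
  congr 1
  field_simp

-- `σ₂` is the norm of the bipartite adjacency operator on the orthogonal complement of `1_V`,
-- its top right singular vector, whose singular value is `σ₁ = √(dU·dV)`.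
theorem stmt_6_general {U V : Type*} [Fintype U] [Fintype V]
    (r : U → V → Prop) [∀ u v, Decidable (r u v)] (dU dV : ℕ) (hdU : 1 ≤ dU)
    (hU : ∀ u : U, (Finset.univ.filter (fun v => r u v)).card = dU)
    (hV : ∀ v : V, (Finset.univ.filter (fun u => r u v)).card = dV)
    (σ₂ : ℝ) (hσ₂nonneg : 0 ≤ σ₂)
    (hσ₂ : ∀ x : V → ℝ, ∑ v, x v = 0 →
      ∑ u, (∑ v, (if r u v then x v else 0)) ^ 2 ≤ σ₂ ^ 2 * ∑ v, (x v) ^ 2)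
    (X : Finset U) (hX : X.Nonempty) (Y : Finset V) (α β : ℝ)
    (hα : α = (X.card : ℝ) / (Fintype.card U : ℝ))
    (hβ : β = (Y.card : ℝ) / (Fintype.card V : ℝ)) :
    ∃ x ∈ X, ((Y.filter (fun v => r x v)).card : ℝ)
      ≥ (dU : ℝ) * (β - σ₂ / Real.sqrt ((dU : ℝ) * dV) * Real.sqrt (β / α)) := by
  classical
  have hcardU : 0 < Fintype.card U := hX.card_pos.trans_le (card_le_univ X)
  have hdouble : Fintype.card U * dU = Fintype.card V * dV := by
    simpa using card_mul_eq_card_mul r (s := univ) (t := univ) (fun u _ => hU u) (fun v _ => hV v)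
  have hratio : dU / √(dU * dV) * √(β / α) = √(#Y / #X) := by
    rw [hα, hβ]
    exact div_sqrt_mul_mul_sqrt_density_ratio hdouble hcardU hdU _ _
  have hmix := sum_sq_card_filter_sub_le r hσ₂ Y
  simp only [hU, ← hβ] at hmix
  obtain ⟨u, hu, hle⟩ := exists_sub_sqrt_le_of_sum_sq_sub_le hX <|
    (sum_le_sum_of_subset_of_nonneg (subset_univ X) fun _ _ _ => sq_nonneg _).trans hmix
  refine ⟨u, hu, le_of_eq_of_le ?_ hle⟩
  calc (dU : ℝ) * (β - σ₂ / √(dU * dV) * √(β / α))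
      = β * dU - σ₂ * (dU / √(dU * dV) * √(β / α)) := by ring
    _ = β * dU - √(σ₂ ^ 2 * #Y / #X) := by
      rw [hratio, mul_div_assoc, Real.sqrt_mul (sq_nonneg σ₂), Real.sqrt_sq hσ₂nonneg]

/-- Corollary of the Expander Mixing Lemma: in a biregular bipartite graph with parts
`U`, `V` and singular values `σ₁ = √(dU·dV) ≥ σ₂`, for `X ⊆ U` nonempty of density `α` and
`Y ⊆ V` of density `β`, some vertex of `X` has at least `dU·(β - (σ₂/σ₁)·√(β/α))`
neighbours in `Y`; in particular this bounds the maximum degree of the induced subgraph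
on `X ∪ Y`. As in the paper, `σ₂` is the norm of the bipartite adjacency matrix on the
orthogonal complement of the top singular vector `1_V`. -/
theorem stmt_6 {U V : Type*} [Fintype U] [Fintype V] [Nonempty U] [Nonempty V]
    (r : U → V → Prop) [∀ u v, Decidable (r u v)] (dU dV : ℕ) (hdU : 1 ≤ dU) (hdV : 1 ≤ dV)
    (hU : ∀ u : U, (Finset.univ.filter (fun v => r u v)).card = dU)
    (hV : ∀ v : V, (Finset.univ.filter (fun u => r u v)).card = dV)
    (σ₂ : ℝ) (hσ₂nonneg : 0 ≤ σ₂)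
    (hσ₂ : ∀ x : V → ℝ, ∑ v, x v = 0 →
      ∑ u, (∑ v, (if r u v then x v else 0)) ^ 2 ≤ σ₂ ^ 2 * ∑ v, (x v) ^ 2)
    (hσ₂top : ∃ x : V → ℝ, (∑ v, x v = 0) ∧ x ≠ 0 ∧
      ∑ u, (∑ v, (if r u v then x v else 0)) ^ 2 = σ₂ ^ 2 * ∑ v, (x v) ^ 2)
    (X : Finset U) (hX : X.Nonempty) (Y : Finset V) (α β : ℝ)
    (hα : α = (X.card : ℝ) / (Fintype.card U : ℝ))
    (hβ : β = (Y.card : ℝ) / (Fintype.card V : ℝ)) :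
    ∃ x ∈ X, ((Y.filter (fun v => r x v)).card : ℝ)
      ≥ (dU : ℝ) * (β - σ₂ / Real.sqrt ((dU : ℝ) * dV) * Real.sqrt (β / α)) :=
  stmt_6_general r dU dV hdU hU hV σ₂ hσ₂nonneg hσ₂ X hX Y α β hα hβ
end

section
/- For n ≥ 2k+1, the eigenvalues of the Kneser graph K(n,k) are exactly the numbers (-1)^i · binom(n-k-i, k-i) for i = 0, 1, ..., k. -/
open Finset

namespace KneserAux

variable {n k : ℕ}

abbrev V (n k : ℕ) := {A : Finset (Fin n) // A.card = k}

/-- indicator of `S ⊆ A` -/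
def chi (S : Finset (Fin n)) : V n k → ℝ := fun A => if S ⊆ A.1 then 1 else 0

/-- Kneser adjacency operator -/
def T (f : V n k → ℝ) : V n k → ℝ := fun A => ∑ B, if Disjoint A.1 B.1 then f B else 0

def lam (n k i : ℕ) : ℝ := (-1) ^ i * ((n - k - i).choose (k - i) : ℝ)

/-- counting lemma -/
lemma count_lemma (A : V n k) (S : Finset (Fin n)) (hS : S.card ≤ k) (hd : Disjoint S A.1) :
    (Finset.univ.filter (fun B : V n k => S ⊆ B.1 ∧ Disjoint A.1 B.1)).card
      = (n - k - S.card).choose (k - S.card) := by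
  classical
  have hSsub : S ⊆ Finset.univ \ A.1 := fun x hx => by
    simp [Finset.disjoint_left.mp hd hx]
  have hground : ((Finset.univ \ A.1) \ S).card = n - k - S.card := by
    rw [Finset.card_sdiff_of_subset hSsub, Finset.card_sdiff_of_subset (Finset.subset_univ _), Finset.card_univ,
      Fintype.card_fin, A.2]
  have := Finset.card_powersetCard (k - S.card) ((Finset.univ \ A.1) \ S)
  rw [hground] at this
  rw [← this]
  apply Finset.card_bij (fun (B : V n k) _ => B.1 \ S)
  · rintro B hB
    simp only [Finset.mem_filter, Finset.mem_univ, true_and] at hB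
    obtain ⟨hSB, hAB⟩ := hB
    rw [Finset.mem_powersetCard]
    constructor
    · intro x hx
      simp only [Finset.mem_sdiff] at hx ⊢
      exact ⟨⟨Finset.mem_univ _, fun hxa => Finset.disjoint_left.mp hAB hxa hx.1⟩, hx.2⟩
    · rw [Finset.card_sdiff_of_subset hSB, B.2]
  · rintro B1 hB1 B2 hB2 h
    simp only [Finset.mem_filter, Finset.mem_univ, true_and] at hB1 hB2
    apply Subtype.ext
    have e1 : B1.1 = (B1.1 \ S) ∪ S := by
      rw [Finset.sdiff_union_self_eq_union, Finset.union_eq_left.mpr hB1.1]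
    have e2 : B2.1 = (B2.1 \ S) ∪ S := by
      rw [Finset.sdiff_union_self_eq_union, Finset.union_eq_left.mpr hB2.1]
    rw [e1, e2, h]
  · rintro C hC
    rw [Finset.mem_powersetCard] at hC
    obtain ⟨hCsub, hCcard⟩ := hC
    have hCS : Disjoint C S := by
      apply Finset.disjoint_left.mpr
      intro x hx
      have := hCsub hx
      simp only [Finset.mem_sdiff] at this
      exact this.2
    have hCA : Disjoint A.1 C := by
      apply Finset.disjoint_right.mpr
      intro x hx
      have := hCsub hx
      simp only [Finset.mem_sdiff] at this
      exact this.1.2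
    have hcard : (C ∪ S).card = k := by
      rw [Finset.card_union_of_disjoint hCS, hCcard, tsub_add_cancel_of_le hS]
    refine ⟨⟨C ∪ S, hcard⟩, ?_, ?_⟩
    · simp only [Finset.mem_filter, Finset.mem_univ, true_and]
      exact ⟨Finset.subset_union_right, Finset.disjoint_union_right.mpr ⟨hCA, hd.symm⟩⟩
    · simp only
      rw [Finset.union_sdiff_right, Finset.sdiff_eq_self_of_disjoint hCS]

/-- inclusion-exclusion -/
lemma incl_excl (S A : Finset (Fin n)) :
    ∑ t ∈ S.powerset, (-1 : ℝ) ^ t.card * (if t ⊆ A then 1 else 0)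
      = if Disjoint S A then 1 else 0 := by
  classical
  have h1 : S.powerset.filter (· ⊆ A) = (S ∩ A).powerset := by
    ext t
    simp only [Finset.mem_filter, Finset.mem_powerset, Finset.subset_inter_iff]
  calc ∑ t ∈ S.powerset, (-1:ℝ)^t.card * (if t ⊆ A then 1 else 0)
      = ∑ t ∈ S.powerset, (if t ⊆ A then (-1:ℝ)^t.card else 0) := by
        apply Finset.sum_congr rfl; intro t _; split <;> ring
    _ = ∑ t ∈ (S ∩ A).powerset, (-1:ℝ)^t.card := by
        rw [← Finset.sum_filter, h1]
    _ = ((∑ t ∈ (S ∩ A).powerset, (-1:ℤ)^t.card : ℤ) : ℝ) := by push_cast; rfl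
    _ = if Disjoint S A then 1 else 0 := by
        rw [Finset.sum_powerset_neg_one_pow_card]
        by_cases h : Disjoint S A
        · rw [if_pos (Finset.disjoint_iff_inter_eq_empty.mp h), if_pos h]; norm_num
        · rw [if_neg (fun he => h (Finset.disjoint_iff_inter_eq_empty.mpr he)), if_neg h]
          norm_num

lemma T_chi (S : Finset (Fin n)) (hS : S.card ≤ k) (A : V n k) :
    T (chi S) A = ((n - k - S.card).choose (k - S.card) : ℝ) *
      ∑ t ∈ S.powerset, (-1 : ℝ) ^ t.card * chi t A := by
  classical
  have hrhs : ∑ t ∈ S.powerset, (-1:ℝ)^t.card * chi t A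
      = if Disjoint S A.1 then 1 else 0 := incl_excl S A.1
  have hlhs : T (chi S) A
      = ((Finset.univ.filter (fun B : V n k => S ⊆ B.1 ∧ Disjoint A.1 B.1)).card : ℝ) := by
    rw [T, Finset.card_filter]
    push_cast
    apply Finset.sum_congr rfl
    intro B _
    by_cases h1 : Disjoint A.1 B.1 <;> by_cases h2 : S ⊆ B.1 <;> simp [chi, h1, h2]
  by_cases h : Disjoint S A.1
  · rw [hlhs, hrhs, if_pos h, mul_one, count_lemma A S hS h]
  · rw [hlhs, hrhs, if_neg h, mul_zero]
    norm_cast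
    rw [Finset.card_eq_zero, Finset.filter_eq_empty_iff]
    rintro B - ⟨hSB, hAB⟩
    rw [Finset.not_disjoint_iff] at h
    obtain ⟨x, hxS, hxA⟩ := h
    exact (Finset.disjoint_left.mp hAB hxA) (hSB hxS)

def U (n k : ℕ) (i : ℕ) : Submodule ℝ (V n k → ℝ) :=
  Submodule.span ℝ {g | ∃ S : Finset (Fin n), S.card < i ∧ g = chi S}

lemma Tlin_exists : ∃ L : (V n k → ℝ) →ₗ[ℝ] (V n k → ℝ), ∀ f, L f = T f := by
  refine ⟨{ toFun := T, map_add' := ?_, map_smul' := ?_ }, fun f => rfl⟩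
  · intro f g; funext A
    simp only [T, Pi.add_apply]
    rw [← Finset.sum_add_distrib]
    apply Finset.sum_congr rfl; intro B _; split <;> simp
  · intro c f; funext A
    simp only [T, Pi.smul_apply, RingHom.id_apply, smul_eq_mul, Finset.mul_sum]
    apply Finset.sum_congr rfl; intro B _; split <;> simp

lemma filtration (i : ℕ) (hi : i ≤ k) (f : V n k → ℝ) (hf : f ∈ U n k (i+1)) :
    T f - lam n k i • f ∈ U n k i := by
  classical
  obtain ⟨L, hL⟩ := Tlin_exists (n := n) (k := k)
  set M : (V n k → ℝ) →ₗ[ℝ] (V n k → ℝ) := L - lam n k i • LinearMap.id with hM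
  have key : U n k (i+1) ≤ Submodule.comap M (U n k i) := by
    rw [U, Submodule.span_le]
    rintro g ⟨S, hScard, rfl⟩
    simp only [Submodule.mem_comap, hM, LinearMap.sub_apply, LinearMap.smul_apply,
      LinearMap.id_apply, hL, SetLike.mem_coe]
    have hSk : S.card ≤ k := by omega
    have gen : ∀ t : Finset (Fin n), t.card < i → chi t ∈ U n k i := fun t ht =>
      Submodule.subset_span ⟨t, ht, rfl⟩
    by_cases hcase : S.card = i
    · have heq : T (n := n) (k := k) (chi S) - lam n k i • chi S
          = ∑ t ∈ S.powerset.erase S,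
              ((((n-k-i).choose (k-i) : ℝ)) * (-1:ℝ)^t.card) • chi t := by
        funext A
        have h1 := T_chi S hSk A
        have h2 : ∑ t ∈ S.powerset, (-1:ℝ)^t.card * chi t A
            = (∑ t ∈ S.powerset.erase S, (-1:ℝ)^t.card * chi t A)
              + (-1:ℝ)^S.card * chi S A :=
          (Finset.sum_erase_add _ _ (Finset.mem_powerset_self S)).symm
        simp only [Pi.sub_apply, Pi.smul_apply, Finset.sum_apply, smul_eq_mul]
        rw [h1, h2, hcase, lam, mul_add, Finset.mul_sum]
        have h3 : ∑ t ∈ S.powerset.erase S,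
              ((n - k - i).choose (k - i) : ℝ) * ((-1:ℝ) ^ t.card * chi t A)
            = ∑ t ∈ S.powerset.erase S,
              (((n - k - i).choose (k - i) : ℝ) * (-1:ℝ) ^ t.card) * chi t A := by
          apply Finset.sum_congr rfl; intros; ring
        rw [h3]
        ring
      rw [heq]
      apply Submodule.sum_mem
      intro t ht
      rw [Finset.mem_erase, Finset.mem_powerset] at ht
      have htcard : t.card < i := by
        rcases lt_or_eq_of_le (Finset.card_le_card ht.2) with h | h
        · omega
        · exact absurd (Finset.eq_of_subset_of_card_le ht.2 (le_of_eq h.symm)) ht.1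
      exact Submodule.smul_mem _ _ (gen t htcard)
    · have hSi : S.card < i := by omega
      have heq : T (n := n) (k := k) (chi S)
          = ∑ t ∈ S.powerset, ((((n-k-S.card).choose (k-S.card) : ℝ)) * (-1:ℝ)^t.card) • chi t := by
        funext A
        simp only [Finset.sum_apply, Pi.smul_apply, smul_eq_mul]
        rw [T_chi S hSk A, Finset.mul_sum]
        simp only [mul_assoc]
      apply Submodule.sub_mem
      · rw [heq]
        apply Submodule.sum_mem
        intro t ht
        rw [Finset.mem_powerset] at ht
        exact Submodule.smul_mem _ _ (gen t (lt_of_le_of_lt (Finset.card_le_card ht) hSi))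
      · exact Submodule.smul_mem _ _ (gen S hSi)
  have := key hf
  simp only [Submodule.mem_comap, hM, LinearMap.sub_apply, LinearMap.smul_apply,
    LinearMap.id_apply, hL] at this
  exact this

lemma top_le_U : ∀ f : V n k → ℝ, f ∈ U n k (k+1) := by
  classical
  intro f
  have hrep : f = ∑ A : V n k, f A • chi A.1 := by
    funext B
    rw [Finset.sum_apply]
    rw [Finset.sum_eq_single B]
    · simp [chi]
    · intro A _ hAB
      have hns : ¬ A.1 ⊆ B.1 := fun hsub =>
        hAB (Subtype.ext (Finset.eq_of_subset_of_card_le hsub (by rw [A.2, B.2])))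
      simp [chi, hns]
    · simp
  rw [hrep]
  apply Submodule.sum_mem
  intro A _
  exact Submodule.smul_mem _ _ (Submodule.subset_span ⟨A.1, by rw [A.2]; omega, rfl⟩)

lemma completeness (μ : ℝ) (f : V n k → ℝ) (hf : f ≠ 0) (heig : T f = μ • f) :
    ∃ i ≤ k, μ = lam n k i := by
  by_contra hcon
  push_neg at hcon
  apply hf
  have main : ∀ i, i ≤ k+1 → ∀ g : V n k → ℝ, T g = μ • g → g ∈ U n k i → g = 0 := by
    intro i
    induction i with
    | zero =>
      intro _ g hg hU
      have hU0 : U n k 0 = ⊥ := by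
        rw [U]
        convert Submodule.span_empty
        ext g
        simp
      rw [hU0] at hU
      simpa using hU
    | succ i ih =>
      intro hi g hg hU
      have h1 : T g - lam n k i • g ∈ U n k i := filtration i (by omega) g hU
      rw [hg] at h1
      have h2 : (μ - lam n k i) • g ∈ U n k i := by
        rw [sub_smul]; exact h1
      have hne : μ - lam n k i ≠ 0 := sub_ne_zero.mpr (hcon i (by omega))
      have h3 : g ∈ U n k i := by
        have := Submodule.smul_mem (U n k i) (μ - lam n k i)⁻¹ h2
        rwa [smul_smul, inv_mul_cancel₀ hne, one_smul] at this
      exact ih (by omega) g hg h3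
  exact main (k+1) le_rfl f heig (top_le_U f)

/-! ### Explicit eigenvectors -/

def evec (n k i : ℕ) : V n k → ℝ := fun A =>
  ∏ j ∈ Finset.range i,
    ((if 2*j ∈ A.1.image Fin.val then (1:ℝ) else 0)
      - (if 2*j+1 ∈ A.1.image Fin.val then 1 else 0))

lemma evec_ne_zero (hn : 2*k+1 ≤ n) (i : ℕ) (hi : i ≤ k) : evec n k i ≠ 0 := by
  classical
  have hn0 : 0 < n := by omega
  set e : ℕ → Fin n := fun m => ⟨m % n, Nat.mod_lt _ hn0⟩ with he
  have hev : ∀ m, m < n → (e m).val = m := fun m hm => Nat.mod_eq_of_lt hm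
  set A0 : Finset (Fin n) :=
    (Finset.range i).image (fun j => e (2*j)) ∪
    (Finset.range (k-i)).image (fun j => e (2*i+j)) with hA0
  have hval1 : ∀ j ∈ Finset.range i, (e (2*j)).val = 2*j := by
    intro j hj; rw [Finset.mem_range] at hj; exact hev _ (by omega)
  have hval2 : ∀ j ∈ Finset.range (k-i), (e (2*i+j)).val = 2*i+j := by
    intro j hj; rw [Finset.mem_range] at hj; exact hev _ (by omega)
  have hd : Disjoint ((Finset.range i).image (fun j => e (2*j)))
      ((Finset.range (k-i)).image (fun j => e (2*i+j))) := by
    rw [Finset.disjoint_left]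
    rintro x hx1 hx2
    rw [Finset.mem_image] at hx1 hx2
    obtain ⟨j1, hj1, rfl⟩ := hx1
    obtain ⟨j2, hj2, hx⟩ := hx2
    have e1 := hval1 j1 hj1
    have e2 := hval2 j2 hj2
    rw [hx] at e2
    rw [Finset.mem_range] at hj1 hj2
    omega
  have hcard : A0.card = k := by
    rw [hA0, Finset.card_union_of_disjoint hd,
      Finset.card_image_of_injOn, Finset.card_image_of_injOn]
    · rw [Finset.card_range, Finset.card_range]; omega
    · intro a ha b hb hab
      have h1 := hval2 a ha
      have h2 := hval2 b hb
      have h3 : ((e (2*i+a)) : ℕ) = ((e (2*i+b)) : ℕ) := congrArg Fin.val hab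
      omega
    · intro a ha b hb hab
      have h1 := hval1 a ha
      have h2 := hval1 b hb
      have h3 : ((e (2*a)) : ℕ) = ((e (2*b)) : ℕ) := congrArg Fin.val hab
      omega
  intro hzero
  have h1 : evec n k i ⟨A0, hcard⟩ = 0 := by rw [hzero]; rfl
  have h2 : evec n k i ⟨A0, hcard⟩ = 1 := by
    rw [evec]
    apply Finset.prod_eq_one
    intro j hj
    rw [Finset.mem_range] at hj
    have hmem1 : 2*j ∈ A0.image Fin.val := by
      rw [Finset.mem_image]
      exact ⟨e (2*j), Finset.mem_union_left _
        (Finset.mem_image.mpr ⟨j, Finset.mem_range.mpr hj, rfl⟩), hev _ (by omega)⟩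
    have hmem2 : 2*j+1 ∉ A0.image Fin.val := by
      rw [Finset.mem_image]
      rintro ⟨x, hx, hxv⟩
      rw [hA0, Finset.mem_union, Finset.mem_image, Finset.mem_image] at hx
      rcases hx with ⟨j', hj', rfl⟩ | ⟨j', hj', rfl⟩
      · have := hval1 j' hj'
        rw [hxv] at this
        omega
      · have := hval2 j' hj'
        rw [hxv] at this
        rw [Finset.mem_range] at hj'
        omega
    rw [if_pos hmem1, if_neg hmem2]
    norm_num
  rw [h1] at h2
  norm_num at h2

lemma evec_eigen (hn : 2*k+1 ≤ n) (i : ℕ) (hi : i ≤ k) (A : V n k) :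
    T (evec n k i) A = lam n k i * evec n k i A := by
  classical
  have hn0 : 0 < n := by omega
  set e : ℕ → Fin n := fun m => ⟨m % n, Nat.mod_lt _ hn0⟩ with he
  have hev : ∀ m, m < n → (e m).val = m := fun m hm => Nat.mod_eq_of_lt hm
  have hmem : ∀ (B : Finset (Fin n)) (m : ℕ), m < n → (m ∈ B.image Fin.val ↔ e m ∈ B) := by
    intro B m hm
    simp only [Finset.mem_image]
    constructor
    · rintro ⟨x, hx, rfl⟩
      have hx2 : e x.val = x := Fin.ext (hev _ x.isLt)
      rwa [hx2]
    · intro hx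
      exact ⟨e m, hx, hev m hm⟩
  set fac : ℕ → V n k → ℝ := fun j B =>
    (if 2*j ∈ B.1.image Fin.val then (1:ℝ) else 0)
      - (if 2*j+1 ∈ B.1.image Fin.val then 1 else 0) with hfacdef
  have hprod : ∀ B : V n k, evec n k i B = ∏ j ∈ Finset.range i, fac j B := fun B => rfl
  have hb1 : ∀ j, j < i → 2*j < n := by omega
  have hb2 : ∀ j, j < i → 2*j+1 < n := by omega
  -- characterization of fac via e-membership
  have hfac : ∀ (j : ℕ), j < i → ∀ B : V n k, fac j B =
      (if e (2*j) ∈ B.1 then (1:ℝ) else 0) - (if e (2*j+1) ∈ B.1 then 1 else 0) := by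
    intro j hj B
    rw [hfacdef]
    simp only
    rw [if_congr (hmem B.1 _ (hb1 j hj)) rfl rfl, if_congr (hmem B.1 _ (hb2 j hj)) rfl rfl]
  by_cases hA : ∀ j ∈ Finset.range i, fac j A ≠ 0
  · -- Case 1 : exactly one of each pair is in A
    have hone : ∀ j, j < i → ((e (2*j) ∈ A.1 ∧ e (2*j+1) ∉ A.1) ∨
        (e (2*j) ∉ A.1 ∧ e (2*j+1) ∈ A.1)) := by
      intro j hj
      have h := hA j (Finset.mem_range.mpr hj)
      rw [hfac j hj A] at h
      by_cases h1 : e (2*j) ∈ A.1 <;> by_cases h2 : e (2*j+1) ∈ A.1 <;>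
        simp [h1, h2] at h ⊢
    set F : Finset (Fin n) :=
      (Finset.range i).image (fun j => if e (2*j) ∈ A.1 then e (2*j+1) else e (2*j)) with hF
    have hFval : ∀ j, j < i → ∀ x, x = (if e (2*j) ∈ A.1 then e (2*j+1) else e (2*j)) →
        (x.val = 2*j ∨ x.val = 2*j+1) ∧ x ∉ A.1 := by
      intro j hj x hx
      rcases hone j hj with ⟨h1, h2⟩ | ⟨h1, h2⟩
      · rw [hx, if_pos h1]
        exact ⟨Or.inr (hev _ (hb2 j hj)), h2⟩
      · rw [hx, if_neg h1]
        exact ⟨Or.inl (hev _ (hb1 j hj)), h1⟩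
    have hFd : Disjoint F A.1 := by
      rw [Finset.disjoint_left]
      rintro x hx hxA
      rw [hF, Finset.mem_image] at hx
      obtain ⟨j, hj, hxe⟩ := hx
      rw [Finset.mem_range] at hj
      exact ((hFval j hj x hxe.symm).2) hxA
    have hFcard : F.card = i := by
      rw [hF, Finset.card_image_of_injOn, Finset.card_range]
      intro a ha b hb hab
      rw [Finset.mem_coe, Finset.mem_range] at ha hb
      have h1 := hFval a ha _ rfl
      have h2 := hFval b hb _ rfl
      have h3 : ((if e (2*a) ∈ A.1 then e (2*a+1) else e (2*a)) : Fin n).val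
          = ((if e (2*b) ∈ A.1 then e (2*b+1) else e (2*b)) : Fin n).val :=
        congrArg Fin.val hab
      rcases h1.1 with x1 | x1 <;> rcases h2.1 with x2 | x2 <;> omega
    -- evaluate the sum
    have hstep1 : T (evec n k i) A
        = ∑ B ∈ Finset.univ.filter (fun B : V n k => Disjoint A.1 B.1), evec n k i B := by
      rw [T, ← Finset.sum_filter]
    have hsub : Finset.univ.filter (fun B : V n k => F ⊆ B.1 ∧ Disjoint A.1 B.1)
        ⊆ Finset.univ.filter (fun B : V n k => Disjoint A.1 B.1) := by
      intro B hB
      rw [Finset.mem_filter] at hB ⊢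
      exact ⟨hB.1, hB.2.2⟩
    have hzero : ∀ B ∈ Finset.univ.filter (fun B : V n k => Disjoint A.1 B.1),
        B ∉ Finset.univ.filter (fun B : V n k => F ⊆ B.1 ∧ Disjoint A.1 B.1) →
          evec n k i B = 0 := by
      intro B hB hnB
      rw [Finset.mem_filter] at hB hnB
      have hd : Disjoint A.1 B.1 := hB.2
      have hnF : ¬ F ⊆ B.1 := by
        intro hc
        exact hnB ⟨Finset.mem_univ _, hc, hd⟩
      rw [Finset.not_subset] at hnF
      obtain ⟨x, hxF, hxB⟩ := hnF
      rw [hF, Finset.mem_image] at hxF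
      obtain ⟨j, hj, hxe⟩ := hxF
      rw [Finset.mem_range] at hj
      rw [hprod B]
      apply Finset.prod_eq_zero (Finset.mem_range.mpr hj)
      rw [hfac j hj B]
      rcases hone j hj with ⟨h1, h2⟩ | ⟨h1, h2⟩
      · rw [if_pos h1] at hxe
        have hq : e (2*j+1) ∉ B.1 := by rwa [hxe]
        have hp : e (2*j) ∉ B.1 := Finset.disjoint_left.mp hd h1
        rw [if_neg hp, if_neg hq]; ring
      · rw [if_neg h1] at hxe
        have hp : e (2*j) ∉ B.1 := by rwa [hxe]
        have hq : e (2*j+1) ∉ B.1 := Finset.disjoint_left.mp hd h2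
        rw [if_neg hp, if_neg hq]; ring
    have hstep2 : T (evec n k i) A
        = ∑ B ∈ Finset.univ.filter (fun B : V n k => F ⊆ B.1 ∧ Disjoint A.1 B.1),
            evec n k i B := by
      rw [hstep1, Finset.sum_subset hsub hzero]
    have hconst : ∀ B ∈ Finset.univ.filter (fun B : V n k => F ⊆ B.1 ∧ Disjoint A.1 B.1),
        evec n k i B = (-1:ℝ)^i * evec n k i A := by
      intro B hB
      rw [Finset.mem_filter] at hB
      obtain ⟨-, hFB, hd⟩ := hB
      have hfacs : ∀ j ∈ Finset.range i, fac j B = - fac j A := by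
        intro j hjr
        rw [Finset.mem_range] at hjr
        rw [hfac j hjr B, hfac j hjr A]
        rcases hone j hjr with ⟨h1, h2⟩ | ⟨h1, h2⟩
        · have hq : e (2*j+1) ∈ B.1 := hFB (by
            rw [hF, Finset.mem_image]
            exact ⟨j, Finset.mem_range.mpr hjr, by rw [if_pos h1]⟩)
          have hp : e (2*j) ∉ B.1 := Finset.disjoint_left.mp hd h1
          rw [if_pos h1, if_neg h2, if_neg hp, if_pos hq]; ring
        · have hp : e (2*j) ∈ B.1 := hFB (by
            rw [hF, Finset.mem_image]
            exact ⟨j, Finset.mem_range.mpr hjr, by rw [if_neg h1]⟩)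
          have hq : e (2*j+1) ∉ B.1 := Finset.disjoint_left.mp hd h2
          rw [if_neg h1, if_pos h2, if_pos hp, if_neg hq]; ring
      rw [hprod B, Finset.prod_congr rfl hfacs, hprod A]
      have hgen : ∏ j ∈ Finset.range i, (-fac j A)
          = (-1:ℝ)^i * ∏ j ∈ Finset.range i, fac j A := by
        have hpow : (-1:ℝ)^i = ∏ _j ∈ Finset.range i, (-1:ℝ) := by
          rw [Finset.prod_const, Finset.card_range]
        rw [hpow, ← Finset.prod_mul_distrib]
        apply Finset.prod_congr rfl
        intros; ring
      exact hgen
    have hcount := count_lemma A F (by rw [hFcard]; omega) hFd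
    rw [hFcard] at hcount
    rw [hstep2, Finset.sum_congr rfl hconst, Finset.sum_const, hcount, lam]
    simp only [nsmul_eq_mul]
    ring
  · -- Case 2 : some factor of A vanishes
    push_neg at hA
    obtain ⟨j₀, hj₀r, hj₀⟩ := hA
    have hj₀i : j₀ < i := Finset.mem_range.mp hj₀r
    have hevA : evec n k i A = 0 := by
      rw [hprod A]
      exact Finset.prod_eq_zero hj₀r hj₀
    rw [hevA, mul_zero]
    rw [hfac j₀ hj₀i A] at hj₀
    set p : Fin n := e (2*j₀) with hp
    set q : Fin n := e (2*j₀+1) with hq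
    have hpq : p ≠ q := by
      intro h
      have := congrArg Fin.val h
      rw [hev _ (hb1 _ hj₀i), hev _ (hb2 _ hj₀i)] at this
      omega
    by_cases hcase : p ∈ A.1
    · -- both p and q in A
      have hqA : q ∈ A.1 := by
        by_contra hqA
        rw [if_pos hcase, if_neg hqA] at hj₀
        norm_num at hj₀
      apply Finset.sum_eq_zero
      intro B _
      split
      · next hd =>
        rw [hprod B]
        apply Finset.prod_eq_zero hj₀r
        rw [hfac j₀ hj₀i B, if_neg (Finset.disjoint_left.mp hd hcase),
          if_neg (Finset.disjoint_left.mp hd hqA)]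
        ring
      · rfl
    · -- p ∉ A, hence q ∉ A : involution
      have hqA : q ∉ A.1 := by
        intro hqA
        rw [if_neg hcase, if_pos hqA] at hj₀
        norm_num at hj₀
      have hk1 : 1 ≤ k := by omega
      have hpval : p.val = 2*j₀ := hev _ (hb1 _ hj₀i)
      have hqval : q.val = 2*j₀+1 := hev _ (hb2 _ hj₀i)
      have hfacj₀ : ∀ B : V n k, fac j₀ B
          = (if p ∈ B.1 then (1:ℝ) else 0) - (if q ∈ B.1 then 1 else 0) :=
        fun B => hfac j₀ hj₀i B
      set g : V n k → V n k := fun B =>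
        if hpB : p ∈ B.1 ∧ q ∉ B.1 then
          ⟨insert q (B.1.erase p), by
            rw [Finset.card_insert_of_notMem (fun hc => hpB.2 (Finset.mem_of_mem_erase hc)),
              Finset.card_erase_of_mem hpB.1, B.2]
            omega⟩
        else if hqB : q ∈ B.1 ∧ p ∉ B.1 then
          ⟨insert p (B.1.erase q), by
            rw [Finset.card_insert_of_notMem (fun hc => hqB.2 (Finset.mem_of_mem_erase hc)),
              Finset.card_erase_of_mem hqB.1, B.2]
            omega⟩
        else B with hg
      have hgP : ∀ B : V n k, (p ∈ B.1 ∧ q ∉ B.1) → (g B).1 = insert q (B.1.erase p) := by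
        intro B hB; rw [hg]; simp only [dif_pos hB]
      have hgQ : ∀ B : V n k, (q ∈ B.1 ∧ p ∉ B.1) → (g B).1 = insert p (B.1.erase q) := by
        intro B hB
        have hnot : ¬(p ∈ B.1 ∧ q ∉ B.1) := fun hc => hB.2 hc.1
        rw [hg]; simp only [dif_neg hnot, dif_pos hB]
      have hgN : ∀ B : V n k, ¬(p ∈ B.1 ∧ q ∉ B.1) → ¬(q ∈ B.1 ∧ p ∉ B.1) → g B = B := by
        intro B h1 h2; rw [hg]; simp only [dif_neg h1, dif_neg h2]
      have hgmem : ∀ (B : V n k) (x : Fin n), x ≠ p → x ≠ q → (x ∈ (g B).1 ↔ x ∈ B.1) := by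
        intro B x hxp hxq
        by_cases h1 : p ∈ B.1 ∧ q ∉ B.1
        · rw [hgP B h1]
          simp [Finset.mem_insert, Finset.mem_erase, hxp, hxq]
        · by_cases h2 : q ∈ B.1 ∧ p ∉ B.1
          · rw [hgQ B h2]
            simp [Finset.mem_insert, Finset.mem_erase, hxp, hxq]
          · rw [hgN B h1 h2]
      have hfz : ∀ B : V n k, ¬(p ∈ B.1 ∧ q ∉ B.1) → ¬(q ∈ B.1 ∧ p ∉ B.1) →
          evec n k i B = 0 := by
        intro B h1 h2
        rw [hprod B]
        apply Finset.prod_eq_zero hj₀r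
        rw [hfacj₀ B]
        by_cases hpB : p ∈ B.1 <;> by_cases hqB : q ∈ B.1
        · simp [hpB, hqB]
        · exact absurd ⟨hpB, hqB⟩ h1
        · exact absurd ⟨hqB, hpB⟩ h2
        · simp [hpB, hqB]
      have hdisj : ∀ B : V n k, Disjoint A.1 (g B).1 ↔ Disjoint A.1 B.1 := by
        intro B
        constructor
        · intro hd
          rw [Finset.disjoint_left] at hd ⊢
          intro x hxA hxB
          have hxp : x ≠ p := fun hc => hcase (hc ▸ hxA)
          have hxq : x ≠ q := fun hc => hqA (hc ▸ hxA)
          exact hd hxA ((hgmem B x hxp hxq).mpr hxB)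
        · intro hd
          rw [Finset.disjoint_left] at hd ⊢
          intro x hxA hxB
          have hxp : x ≠ p := fun hc => hcase (hc ▸ hxA)
          have hxq : x ≠ q := fun hc => hqA (hc ▸ hxA)
          exact hd hxA ((hgmem B x hxp hxq).mp hxB)
      have hflip : ∀ B : V n k, ((p ∈ B.1 ∧ q ∉ B.1) ∨ (q ∈ B.1 ∧ p ∉ B.1)) →
          evec n k i (g B) = - evec n k i B := by
        intro B hB
        rw [hprod (g B), hprod B]
        rw [← Finset.mul_prod_erase _ (fun j => fac j (g B)) hj₀r,
          ← Finset.mul_prod_erase _ (fun j => fac j B) hj₀r]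
        have hrest : ∏ j ∈ (Finset.range i).erase j₀, fac j (g B)
            = ∏ j ∈ (Finset.range i).erase j₀, fac j B := by
          apply Finset.prod_congr rfl
          intro j hj
          rw [Finset.mem_erase, Finset.mem_range] at hj
          rw [hfac j hj.2 (g B), hfac j hj.2 B]
          have hv1 : (e (2*j)).val = 2*j := hev _ (hb1 j hj.2)
          have hv2 : (e (2*j+1)).val = 2*j+1 := hev _ (hb2 j hj.2)
          have hne1 : e (2*j) ≠ p := fun hc => by
            have := congrArg Fin.val hc; rw [hv1, hpval] at this; omega
          have hne2 : e (2*j) ≠ q := fun hc => by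
            have := congrArg Fin.val hc; rw [hv1, hqval] at this; omega
          have hne3 : e (2*j+1) ≠ p := fun hc => by
            have := congrArg Fin.val hc; rw [hv2, hpval] at this; omega
          have hne4 : e (2*j+1) ≠ q := fun hc => by
            have := congrArg Fin.val hc; rw [hv2, hqval] at this; omega
          rw [if_congr (hgmem B _ hne1 hne2) rfl rfl,
            if_congr (hgmem B _ hne3 hne4) rfl rfl]
        have hflip0 : fac j₀ (g B) = - fac j₀ B := by
          rcases hB with ⟨h1, h2⟩ | ⟨h1, h2⟩
          · have hgB := hgP B ⟨h1, h2⟩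
            have hpg : p ∉ (g B).1 := by
              rw [hgB]; simp [Finset.mem_insert, Finset.mem_erase, hpq]
            have hqg : q ∈ (g B).1 := by
              rw [hgB]; exact Finset.mem_insert_self _ _
            rw [hfacj₀ (g B), hfacj₀ B, if_pos h1, if_neg h2, if_neg hpg, if_pos hqg]
            ring
          · have hgB := hgQ B ⟨h1, h2⟩
            have hqg : q ∉ (g B).1 := by
              rw [hgB]; simp [Finset.mem_insert, Finset.mem_erase, Ne.symm hpq]
            have hpg : p ∈ (g B).1 := by
              rw [hgB]; exact Finset.mem_insert_self _ _
            rw [hfacj₀ (g B), hfacj₀ B, if_neg h2, if_pos h1, if_pos hpg, if_neg hqg]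
            ring
        simp only [hrest, hflip0]
        ring
      rw [T]
      apply Finset.sum_ninvolution g
      · intro B
        by_cases hB : (p ∈ B.1 ∧ q ∉ B.1) ∨ (q ∈ B.1 ∧ p ∉ B.1)
        · by_cases hd : Disjoint A.1 B.1
          · rw [if_pos hd, if_pos ((hdisj B).mpr hd), hflip B hB]
            ring
          · rw [if_neg hd, if_neg (fun hc => hd ((hdisj B).mp hc))]
            ring
        · have h1 : ¬(p ∈ B.1 ∧ q ∉ B.1) := fun hc => hB (Or.inl hc)
          have h2 : ¬(q ∈ B.1 ∧ p ∉ B.1) := fun hc => hB (Or.inr hc)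
          rw [hgN B h1 h2]
          have hz := hfz B h1 h2
          split <;> simp [hz]
      · intro B hBne
        have hd : Disjoint A.1 B.1 := by
          by_contra hd
          rw [if_neg hd] at hBne
          exact hBne rfl
        rw [if_pos hd] at hBne
        by_cases h1 : p ∈ B.1 ∧ q ∉ B.1
        · intro hc
          have hpg : p ∉ (g B).1 := by
            rw [hgP B h1]; simp [Finset.mem_insert, Finset.mem_erase, hpq]
          rw [hc] at hpg
          exact hpg h1.1
        · by_cases h2 : q ∈ B.1 ∧ p ∉ B.1
          · intro hc
            have hqg : q ∉ (g B).1 := by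
              rw [hgQ B h2]; simp [Finset.mem_insert, Finset.mem_erase, Ne.symm hpq]
            rw [hc] at hqg
            exact hqg h2.1
          · exact absurd (hfz B h1 h2) hBne
      · exact fun B => Finset.mem_univ _
      · intro B
        by_cases h1 : p ∈ B.1 ∧ q ∉ B.1
        · have hgB := hgP B h1
          have hc2 : q ∈ (g B).1 ∧ p ∉ (g B).1 := by
            constructor
            · rw [hgB]; exact Finset.mem_insert_self _ _
            · rw [hgB]; simp [Finset.mem_insert, Finset.mem_erase, hpq]
          apply Subtype.ext
          rw [hgQ (g B) hc2, hgB,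
            Finset.erase_insert (fun hc => h1.2 (Finset.mem_of_mem_erase hc)),
            Finset.insert_erase h1.1]
        · by_cases h2 : q ∈ B.1 ∧ p ∉ B.1
          · have hgB := hgQ B h2
            have hc1 : p ∈ (g B).1 ∧ q ∉ (g B).1 := by
              constructor
              · rw [hgB]; exact Finset.mem_insert_self _ _
              · rw [hgB]; simp [Finset.mem_insert, Finset.mem_erase, Ne.symm hpq]
            apply Subtype.ext
            rw [hgP (g B) hc1, hgB,
              Finset.erase_insert (fun hc => h2.2 (Finset.mem_of_mem_erase hc)),
              Finset.insert_erase h2.1]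
          · rw [hgN B h1 h2]
            exact hgN B h1 h2

end KneserAux

open KneserAux in
/-- The eigenvalues of the Kneser graph `K(n,k)` (vertices: `k`-subsets of `[n]`,
adjacency: disjointness) are exactly the numbers `(-1)^i · C(n-k-i, k-i)` for
`0 ≤ i ≤ k`. -/
theorem stmt_8 (n k : ℕ) (hn : 2 * k + 1 ≤ n) (hk : 1 ≤ k) :
    {μ : ℝ | ∃ f : {A : Finset (Fin n) // A.card = k} → ℝ, f ≠ 0 ∧
        ∀ A, ∑ B, (if Disjoint A.val B.val ∧ A ≠ B then f B else 0) = μ * f A}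
      = {μ : ℝ | ∃ i ≤ k, μ = (-1) ^ i * ((n - k - i).choose (k - i) : ℝ)} := by
  have hsum : ∀ (f : V n k → ℝ) (A : V n k),
      (∑ B, if Disjoint A.val B.val ∧ A ≠ B then f B else 0) = T f A := by
    intro f A
    apply Finset.sum_congr rfl
    intro B _
    congr 1
    simp only [eq_iff_iff, and_iff_left_iff_imp]
    intro hd hAB
    subst hAB
    have h0 : A.1 = ∅ := disjoint_self.mp hd
    have := A.2
    rw [h0] at this
    simp at this
    omega
  ext μ
  simp only [Set.mem_setOf_eq]
  constructor
  · rintro ⟨f, hf0, heq⟩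
    have : T f = μ • f := by
      funext A; rw [← hsum f A, heq A]; rfl
    exact completeness μ f hf0 this
  · rintro ⟨i, hi, rfl⟩
    refine ⟨evec n k i, evec_ne_zero hn i hi, fun A => ?_⟩
    rw [hsum, evec_eigen hn i hi A]; rfl
end

section
/- Let n ≥ 2k+1 and let F be a nonempty family of k-subsets of [n] with indicator function f and density α = |F|/binom(n,k). Write f = f₀ + f₁ + ... + f_k for the eigenspace decomposition of f with respect to the Kneser graph K(n,k), and let η = ‖f₁‖²/‖f‖². Then the number of edges of K(n,k) inside F satisfies 2·e(F) ≥ |F| · binom(n-k,k) · (α - (k/(n-k))·(η + (k/(n-k))²)). In particular the maximum degree of K(n,k)[F] is at least binom(n-k,k)·(α - (k/(n-k))·(η + (k/(n-k))²)). -/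
open Finset Matrix

/-!
The Kneser adjacency matrix is symmetric and its eigenvalues `λᵢ = (-1)ⁱ C(n-k-i, k-i)` are
pairwise distinct, since `|λᵢ| = C((n-2k) + (k-i), k-i)` strictly decreases in `i` when
`n > 2k`. Hence the components `gᵢ` are orthogonal, `‖f‖² = ∑ ‖gᵢ‖² = |F|`, and
`2e(F) = ⟨f, Af⟩ = ∑ λᵢ ‖gᵢ‖²`.
Writing `r = k/(n-k)` and `C = C(n-k, k)`, repeated use of `N C(N-1, K-1) = K C(N, K)` gives
`|λᵢ| ≤ rⁱ C`; so `λ₀ = C`, `λ₁ ≥ -rC`, and `λᵢ ≥ -r³C` for `i ≥ 2` because the even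
eigenvalues are positive. With `‖g₀‖² = α|F|` and `‖g₁‖² = η|F|` this is the bound on `2e(F)`,
and averaging over `F` gives a vertex of large degree.
-/

namespace Nat

theorem strictMono_add_choose {m : ℕ} (hm : 0 < m) :
    StrictMono fun t => (m + t).choose t :=
  strictMono_nat_of_lt_succ fun t => by
    rw [show m + (t + 1) = m + t + 1 by ring, choose_succ_succ']
    have : 0 < (m + t).choose (t + 1) := choose_pos (by omega)
    omega

theorem mul_choose_sub_succ_le_mul_choose_sub {N K j : ℕ} (hKN : K ≤ N) (hj : j < K) :
    N * (N - (j + 1)).choose (K - (j + 1)) ≤ K * (N - j).choose (K - j) := by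
  obtain ⟨a, ha⟩ : ∃ a, N - j = a + 1 := ⟨N - j - 1, by omega⟩
  obtain ⟨b, hb⟩ : ∃ b, K - j = b + 1 := ⟨K - j - 1, by omega⟩
  have hstep := add_one_mul_choose_eq a b
  rw [show N - (j + 1) = a by omega, show K - (j + 1) = b by omega, ha, hb]
  refine Nat.le_of_mul_le_mul_right ?_ (show 0 < a + 1 by omega)
  have hNK : N * (b + 1) ≤ K * (a + 1) := by
    have := Nat.mul_le_mul_right j hKN
    rw [← ha, ← hb, Nat.mul_sub, Nat.mul_sub, mul_comm N K]; omega
  calc N * a.choose b * (a + 1) = N * (b + 1) * (a + 1).choose (b + 1) := by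
        rw [mul_assoc, mul_comm _ (a + 1), hstep]; ring
    _ ≤ K * (a + 1) * (a + 1).choose (b + 1) := Nat.mul_le_mul_right _ hNK
    _ = K * (a + 1).choose (b + 1) * (a + 1) := by ring

theorem pow_mul_choose_sub_le_pow_mul_choose {N K i : ℕ} (hKN : K ≤ N) (hi : i ≤ K) :
    N ^ i * (N - i).choose (K - i) ≤ K ^ i * N.choose K := by
  induction i with
  | zero => simp
  | succ i ih =>
    calc N ^ (i + 1) * (N - (i + 1)).choose (K - (i + 1))
        = N ^ i * (N * (N - (i + 1)).choose (K - (i + 1))) := by ring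
      _ ≤ N ^ i * (K * (N - i).choose (K - i)) :=
        Nat.mul_le_mul_left _ (mul_choose_sub_succ_le_mul_choose_sub hKN hi)
      _ = K * (N ^ i * (N - i).choose (K - i)) := by ring
      _ ≤ K * (K ^ i * N.choose K) := Nat.mul_le_mul_left _ (ih (by omega))
      _ = K ^ (i + 1) * N.choose K := by ring

end Nat

namespace Matrix

variable {V ι R : Type*}

def ofRel (R : Type*) [Zero R] [One R] (r : V → V → Prop) [DecidableRel r] : Matrix V V R :=
  of fun a b => if r a b then 1 else 0

theorem ofRel_mulVec_apply [Fintype V] [NonAssocSemiring R] (r : V → V → Prop) [DecidableRel r]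
    (v : V → R) (a : V) : (ofRel R r *ᵥ v) a = ∑ b, if r a b then v b else 0 := by
  simp only [ofRel, mulVec, dotProduct, of_apply, ite_mul, one_mul, zero_mul]

theorem isSymm_ofRel [Zero R] [One R] {r : V → V → Prop} [DecidableRel r]
    (hr : ∀ a b, r a b → r b a) : (ofRel R r).IsSymm :=
  IsSymm.ext fun a b => if_congr ⟨hr b a, hr a b⟩ rfl rfl

theorem indicator_dotProduct_ofRel_mulVec [Fintype V] [DecidableEq V] [NonAssocSemiring R]
    (r : V → V → Prop) [DecidableRel r] (F : Finset V) :
    (fun a => if a ∈ F then (1 : R) else 0) ⬝ᵥ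
        (ofRel R r *ᵥ fun a => if a ∈ F then (1 : R) else 0)
      = #((F ×ˢ F).filter fun p => r p.1 p.2) := by
  simp only [dotProduct, ofRel_mulVec_apply, ite_mul, one_mul, zero_mul, Fintype.sum_ite_mem,
    card_filter, sum_product, Nat.cast_sum, Nat.cast_ite, Nat.cast_one, Nat.cast_zero]
  refine sum_congr rfl fun a _ => ?_
  rw [← Fintype.sum_ite_mem F]
  exact sum_congr rfl fun b _ => by split_ifs <;> rfl

theorem IsSymm.dotProduct_mulVec_comm [Fintype V] [CommSemiring R] {M : Matrix V V R}
    (hM : M.IsSymm) (u v : V → R) : u ⬝ᵥ (M *ᵥ v) = (M *ᵥ u) ⬝ᵥ v := by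
  rw [dotProduct_mulVec, ← mulVec_transpose, hM.eq]

theorem IsSymm.pairwise_dotProduct_eq_zero [Fintype V] [CommRing R] [IsDomain R]
    {M : Matrix V V R} (hM : M.IsSymm) {s : Set ι} {g : ι → V → R} {μ : ι → R} (hμ : s.InjOn μ)
    (hg : ∀ i ∈ s, M *ᵥ g i = μ i • g i) : s.Pairwise fun i j => g i ⬝ᵥ g j = 0 := by
  intro i hi j hj hij
  have : μ i * (g i ⬝ᵥ g j) = μ j * (g i ⬝ᵥ g j) := by
    rw [← smul_eq_mul, ← smul_dotProduct, ← hg i hi, ← hM.dotProduct_mulVec_comm, hg j hj,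
      dotProduct_smul, smul_eq_mul]
  exact (mul_eq_mul_right_iff.mp this).resolve_left fun h => hij (hμ hi hj h)

end Matrix

section Orthogonal

variable {V ι R : Type*} [Fintype V] [CommSemiring R] {s : Finset ι} {g : ι → V → R}

theorem sum_dotProduct_sum_smul_of_pairwise
    (horth : (s : Set ι).Pairwise fun i j => g i ⬝ᵥ g j = 0) (c : ι → R) :
    (∑ i ∈ s, g i) ⬝ᵥ (∑ j ∈ s, c j • g j) = ∑ i ∈ s, c i * (g i ⬝ᵥ g i) := by
  rw [sum_dotProduct]
  refine sum_congr rfl fun i hi => ?_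
  rw [dotProduct_sum, sum_eq_single_of_mem i hi, dotProduct_smul, smul_eq_mul]
  intro j hj hji
  rw [dotProduct_smul, horth hi hj hji.symm, smul_zero]

theorem sum_dotProduct_sum_of_pairwise (horth : (s : Set ι).Pairwise fun i j => g i ⬝ᵥ g j = 0) :
    (∑ i ∈ s, g i) ⬝ᵥ (∑ i ∈ s, g i) = ∑ i ∈ s, g i ⬝ᵥ g i := by
  simpa using sum_dotProduct_sum_smul_of_pairwise horth 1

theorem sum_dotProduct_mulVec_sum_of_pairwise {M : Matrix V V R} {μ : ι → R}
    (horth : (s : Set ι).Pairwise fun i j => g i ⬝ᵥ g j = 0)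
    (hg : ∀ i ∈ s, M *ᵥ g i = μ i • g i) :
    (∑ i ∈ s, g i) ⬝ᵥ (M *ᵥ ∑ i ∈ s, g i) = ∑ i ∈ s, μ i * (g i ⬝ᵥ g i) := by
  rw [mulVec_sum, sum_congr rfl hg, sum_dotProduct_sum_smul_of_pairwise horth]

end Orthogonal

theorem card_filter_product_eq_sum_mul_dotProduct_of_eigen {V ι : Type*} [Fintype V]
    [DecidableEq V] {r : V → V → Prop} [DecidableRel r] (hr : ∀ a b, r a b → r b a)
    {F : Finset V} {s : Finset ι} {g : ι → V → ℝ} {μ : ι → ℝ} (hμ : Set.InjOn μ s)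
    (hg : ∀ i ∈ s, ofRel ℝ r *ᵥ g i = μ i • g i)
    (hdecomp : (fun a => if a ∈ F then (1 : ℝ) else 0) = ∑ i ∈ s, g i) :
    ∑ i ∈ s, g i ⬝ᵥ g i = #F ∧
      (#((F ×ˢ F).filter fun p => r p.1 p.2) : ℝ) = ∑ i ∈ s, μ i * (g i ⬝ᵥ g i) := by
  have horth := (isSymm_ofRel hr).pairwise_dotProduct_eq_zero hμ hg
  refine ⟨?_, ?_⟩
  · rw [← sum_dotProduct_sum_of_pairwise horth, ← hdecomp]
    simp [dotProduct]
  · rw [← indicator_dotProduct_ofRel_mulVec, hdecomp,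
      sum_dotProduct_mulVec_sum_of_pairwise horth hg]

theorem card_filter_product_eq_sum_card_filter {V : Type*} (r : V → V → Prop) [DecidableRel r]
    (F : Finset V) : #((F ×ˢ F).filter fun p => r p.1 p.2) = ∑ a ∈ F, #(F.filter (r a)) := by
  simp only [card_filter, sum_product]

noncomputable def kneserEigenvalue (n k i : ℕ) : ℝ := (-1) ^ i * ((n - k - i).choose (k - i) : ℝ)

section KneserEigenvalue

variable {n k : ℕ}

theorem abs_kneserEigenvalue (n k i : ℕ) :
    |kneserEigenvalue n k i| = (n - k - i).choose (k - i) := by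
  simp [kneserEigenvalue]

theorem kneserEigenvalue_zero (n k : ℕ) : kneserEigenvalue n k 0 = (n - k).choose k := by
  simp [kneserEigenvalue]

theorem kneserEigenvalue_injOn (hn : 2 * k < n) :
    Set.InjOn (kneserEigenvalue n k) (range (k + 1)) := by
  intro i hi j hj hij
  simp only [coe_range, Set.mem_Iio] at hi hj
  have habs := congrArg abs hij
  simp only [abs_kneserEigenvalue, Nat.cast_inj] at habs
  rw [show n - k - i = n - 2 * k + (k - i) by omega,
    show n - k - j = n - 2 * k + (k - j) by omega] at habs
  have := (Nat.strictMono_add_choose (show 0 < n - 2 * k by omega)).injective habs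
  omega

theorem abs_kneserEigenvalue_le (hn : 2 * k < n) {i : ℕ} (hi : i ≤ k) :
    |kneserEigenvalue n k i| ≤ (k / (n - k : ℝ)) ^ i * (n - k).choose k := by
  have hnk : ((n - k : ℕ) : ℝ) = n - k := Nat.cast_sub (by omega)
  have hpos : (0 : ℝ) < ((n - k : ℕ) : ℝ) ^ i := pow_pos (Nat.cast_pos.mpr (by omega)) i
  rw [abs_kneserEigenvalue, div_pow, div_mul_eq_mul_div, ← hnk, le_div_iff₀ hpos, mul_comm]
  exact_mod_cast Nat.pow_mul_choose_sub_le_pow_mul_choose (N := n - k) (by omega) hi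

theorem neg_le_kneserEigenvalue (hn : 2 * k < n) {i : ℕ} (hi : i ≤ k) :
    -((k / (n - k : ℝ)) ^ i * (n - k).choose k) ≤ kneserEigenvalue n k i :=
  (neg_le_neg (abs_kneserEigenvalue_le hn hi)).trans (neg_abs_le _)

theorem kneserRatio_mem_Icc (hn : 2 * k < n) : (k / (n - k : ℝ)) ∈ Set.Icc 0 1 := by
  have hkn : (k : ℝ) < n - k := by
    have : ((2 * k : ℕ) : ℝ) < n := by exact_mod_cast hn
    push_cast at this; linarith
  have hk : (0 : ℝ) ≤ k := Nat.cast_nonneg k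
  exact ⟨div_nonneg hk (by linarith), (div_le_one (by linarith)).2 hkn.le⟩

theorem neg_le_kneserEigenvalue_of_two_le (hn : 2 * k < n) {i : ℕ} (h2i : 2 ≤ i) (hi : i ≤ k) :
    -((k / (n - k : ℝ)) ^ 3 * (n - k).choose k) ≤ kneserEigenvalue n k i := by
  obtain ⟨hr0, hr1⟩ := kneserRatio_mem_Icc hn
  rcases i.even_or_odd with heven | hodd
  · have : 0 ≤ kneserEigenvalue n k i := by
      rw [kneserEigenvalue, heven.neg_one_pow, one_mul]; positivity
    have : 0 ≤ (k / (n - k : ℝ)) ^ 3 * (n - k).choose k := by positivity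
    linarith
  · have h3i : 3 ≤ i := by obtain ⟨j, rfl⟩ := hodd; omega
    refine le_trans (neg_le_neg ?_) (neg_le_kneserEigenvalue hn hi)
    exact mul_le_mul_of_nonneg_right (pow_le_pow_of_le_one hr0 hr1 h3i) (Nat.cast_nonneg _)

theorem choose_mul_le_sum_kneserEigenvalue_mul (hn : 2 * k < n) (hk : 1 ≤ k) {w : ℕ → ℝ}
    (hw : ∀ i, 0 ≤ w i) :
    ((n - k).choose k : ℝ) * (w 0 - k / (n - k : ℝ) * w 1
        - (k / (n - k : ℝ)) ^ 3 * ∑ i ∈ range (k + 1), w i)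
      ≤ ∑ i ∈ range (k + 1), kneserEigenvalue n k i * w i := by
  set r := (k / (n - k : ℝ))
  set C := ((n - k).choose k : ℝ)
  have hr0 := (kneserRatio_mem_Icc hn).1
  have h1 := mul_le_mul_of_nonneg_right
    (pow_one r ▸ neg_le_kneserEigenvalue hn hk) (hw 1)
  have htail : ∑ i ∈ range (k - 1), -(r ^ 3 * C) * w (i + 2)
      ≤ ∑ i ∈ range (k - 1), kneserEigenvalue n k (i + 2) * w (i + 2) :=
    sum_le_sum fun i hi => mul_le_mul_of_nonneg_right
      (neg_le_kneserEigenvalue_of_two_le hn (by omega) (by simp at hi; omega)) (hw _)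
  rw [← mul_sum] at htail
  have hw0 : 0 ≤ r ^ 3 * C * w 0 := by have := hw 0; positivity
  have hw1 : 0 ≤ r ^ 3 * C * w 1 := by have := hw 1; positivity
  obtain ⟨m, rfl⟩ : ∃ m, k = m + 1 := ⟨k - 1, by omega⟩
  simp only [sum_range_succ' _ (m + 1), sum_range_succ' _ m, Nat.add_sub_cancel,
    kneserEigenvalue_zero] at htail ⊢
  linarith

end KneserEigenvalue

/-- If `F` is a nonempty family of `k`-subsets of `[n]` (with `n ≥ 2k+1`) of density `α`,
whose indicator `f` has eigenspace decomposition `f = g 0 + g 1 + ⋯ + g k` with respect to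
the Kneser graph (with `g 0 = α·1` the constant part), and `η = ‖g 1‖²/‖f‖²`, then the
number of ordered disjoint pairs in `F` (i.e. `2·e(F)`) is at least
`|F|·C(n-k,k)·(α - (k/(n-k))·(η + (k/(n-k))²))`; in particular some `A ∈ F` is disjoint
from at least `C(n-k,k)·(α - (k/(n-k))·(η + (k/(n-k))²))` members of `F`. -/
theorem stmt_9 (n k : ℕ) (hn : 2 * k + 1 ≤ n) (hk : 1 ≤ k)
    (F : Finset {A : Finset (Fin n) // A.card = k}) (hF : F.Nonempty)
    (α : ℝ) (hα : α = (F.card : ℝ) / (n.choose k : ℝ))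
    (f : {A : Finset (Fin n) // A.card = k} → ℝ)
    (hf : f = fun A => if A ∈ F then (1 : ℝ) else 0)
    (g : ℕ → {A : Finset (Fin n) // A.card = k} → ℝ)
    (hdecomp : f = ∑ i ∈ Finset.range (k + 1), g i)
    (hg0 : g 0 = fun _ => α)
    (heig : ∀ i ≤ k, ∀ A, ∑ B, (if Disjoint A.val B.val then g i B else 0)
      = ((-1) ^ i * ((n - k - i).choose (k - i) : ℝ)) * g i A)
    (η : ℝ) (hη : η * ∑ A, (f A) ^ 2 = ∑ A, (g 1 A) ^ 2) :
    (((F ×ˢ F).filter (fun p => Disjoint p.1.val p.2.val)).card : ℝ)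
        ≥ (F.card : ℝ) * ((n - k).choose k : ℝ)
            * (α - (k : ℝ) / ((n : ℝ) - k) * (η + ((k : ℝ) / ((n : ℝ) - k)) ^ 2)) ∧
      ∃ A ∈ F, ((F.filter (fun B => Disjoint A.val B.val)).card : ℝ)
        ≥ ((n - k).choose k : ℝ)
            * (α - (k : ℝ) / ((n : ℝ) - k) * (η + ((k : ℝ) / ((n : ℝ) - k)) ^ 2)) := by
  set kneser := fun A B : {A : Finset (Fin n) // A.card = k} => Disjoint A.val B.val
  have hgeig : ∀ i ∈ range (k + 1), Matrix.ofRel ℝ kneser *ᵥ g i = kneserEigenvalue n k i • g i :=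
    fun i hi => funext fun A => by
      rw [Matrix.ofRel_mulVec_apply, heig i (by simp at hi; omega)]; rfl
  obtain ⟨hparseval, hpairs⟩ := card_filter_product_eq_sum_mul_dotProduct_of_eigen
    (fun _ _ h => h.symm) (kneserEigenvalue_injOn hn) hgeig (hf ▸ hdecomp)
  have hnorm0 : g 0 ⬝ᵥ g 0 = α * #F := by
    have hchoose : (n.choose k : ℝ) ≠ 0 := by exact_mod_cast (Nat.choose_pos (by omega)).ne'
    rw [hg0, hα]
    simp only [dotProduct, sum_const, card_univ, Fintype.card_finset_len, Fintype.card_fin,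
      nsmul_eq_mul]
    field_simp
  have hnorm1 : g 1 ⬝ᵥ g 1 = η * #F := by
    simpa [hf, dotProduct, sq] using hη.symm
  have hbound := choose_mul_le_sum_kneserEigenvalue_mul hn hk (w := fun i => g i ⬝ᵥ g i)
    fun i => Fintype.sum_nonneg fun _ => mul_self_nonneg _
  simp only [hnorm0, hnorm1, hparseval] at hbound
  have hedges : (#((F ×ˢ F).filter fun p => Disjoint p.1.val p.2.val) : ℝ)
      ≥ #F * ((n - k).choose k : ℝ) * (α - k / (n - k : ℝ) * (η + (k / (n - k : ℝ)) ^ 2)) := by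
    rw [hpairs]; linarith
  refine ⟨hedges, exists_le_of_sum_le hF ?_⟩
  rw [sum_const, nsmul_eq_mul, ← Nat.cast_sum, ← card_filter_product_eq_sum_card_filter]
  linarith
end

section
/- Let n ≥ 2k+1 and let F be a nonempty family of k-subsets of [n] with indicator f, density α = E(f), and let f₁ be the orthogonal projection of f onto the span of the functions x ↦ x_i - k/n (i ∈ [n]), with η = ‖f₁‖²/‖f‖². For each i let γ_i = |{A ∈ F : i ∈ A}|/binom(n-1,k-1), and γ_max = max_i γ_i. Then η³ ≤ ((n-1)/(n-k))³ · γ_max² + 3·((n-1)/(n-k))² · η · α. -/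
/-!
Write `d i = γ i - α`, so that `∑ i, d i = 0`, and let `c r = binom(n - r, k - r)` be the number of
`k`-sets containing a fixed `r`-set. Testing `f` against the spanning functions gives
`⟨f, φ i⟩ = c 1 * d i`, hence `f₁ A = (n - 1)/(n - k) * ∑ i ∈ A, d i`, and both `‖f₁‖²` and
`∑ A ∈ F, ∑ i ∈ A, d i` are multiples of `∑ i, d i ^ 2`.

Hölder's inequality on `F` bounds `(∑ A ∈ F, g A)⁴` by `|F|³ ∑_A g(A)⁴` for `g A = ∑ i ∈ A, d i`.
Expanding `g(A)⁴` one point at a time gives the exact fourth moment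
`3 (c 2 - 2 c 3 + c 4) (∑ d²)² + (c 1 - 7 c 2 + 12 c 3 - 6 c 4) ∑ d⁴`. For `n ≥ 2k + 1` its
coefficients are at most `3 (c 1)² / binom(n, k)` and `c 1`, and `∑ d⁴ ≤ γmax² ∑ d²` since
`|d i| ≤ γmax`.
-/

open Finset

-- Without the `if`, truncated subtraction would give `choose (n - r) 0 = 1` for `r > k`.
def supersetCount (n k r : ℕ) : ℕ := if r ≤ k then (n - r).choose (k - r) else 0

theorem supersetCount_zero (n k : ℕ) : supersetCount n k 0 = n.choose k := by
  simp [supersetCount]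

theorem supersetCount_one {n k : ℕ} (hk : 1 ≤ k) :
    supersetCount n k 1 = (n - 1).choose (k - 1) := by
  simp [supersetCount, hk]

theorem supersetCount_succ_le {n k : ℕ} (hkn : k ≤ n) (r : ℕ) :
    supersetCount n k (r + 1) ≤ supersetCount n k r := by
  unfold supersetCount
  split_ifs with h₁ h₂
  · obtain ⟨m, hm⟩ : ∃ m, n - r = m + 1 := ⟨n - r - 1, by omega⟩
    obtain ⟨j, hj⟩ : ∃ j, k - r = j + 1 := ⟨k - r - 1, by omega⟩
    rw [hm, hj, show n - (r + 1) = m by omega, show k - (r + 1) = j by omega,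
      Nat.choose_succ_succ']
    exact Nat.le_add_right _ _
  · omega
  all_goals exact Nat.zero_le _

theorem supersetCount_succ_mul {n k : ℕ} (hkn : k ≤ n) (r : ℕ) :
    (supersetCount n k (r + 1) : ℝ) * (n - r) = supersetCount n k r * (k - r) := by
  unfold supersetCount
  split_ifs with h₁ h₂ h₂
  · obtain ⟨m, rfl⟩ : ∃ m, n = m + r + 1 := ⟨n - r - 1, by omega⟩
    obtain ⟨j, rfl⟩ : ∃ j, k = j + r + 1 := ⟨k - r - 1, by omega⟩
    have key : ((m + 1 : ℕ) : ℝ) * m.choose j = (m + 1).choose (j + 1) * (j + 1 : ℕ) := by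
      exact_mod_cast Nat.add_one_mul_choose_eq m j
    rw [show m + r + 1 - (r + 1) = m by omega, show j + r + 1 - (r + 1) = j by omega,
      show m + r + 1 - r = m + 1 by omega, show j + r + 1 - r = j + 1 by omega]
    push_cast at key ⊢
    linarith
  · omega
  · rw [show r = k by omega]; simp
  · simp

theorem supersetCount_one_sub_two_mul {n k : ℕ} (hkn : k ≤ n) :
    ((supersetCount n k 1 : ℝ) - supersetCount n k 2) * (n - 1)
      = supersetCount n k 1 * (n - k) := by
  linear_combination (-1 : ℝ) * supersetCount_succ_mul hkn 1

theorem supersetCount_two_lt_one {n k : ℕ} (hk : 1 ≤ k) (hkn : k < n) :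
    (supersetCount n k 2 : ℝ) < supersetCount n k 1 := by
  have h := supersetCount_one_sub_two_mul (n := n) (k := k) hkn.le
  have hc₁ : (0 : ℝ) < supersetCount n k 1 := by
    rw [supersetCount_one hk]; exact_mod_cast Nat.choose_pos (by omega)
  have hkn' : (k : ℝ) + 1 ≤ n := by exact_mod_cast hkn
  have hk' : (1 : ℝ) ≤ k := by exact_mod_cast hk
  nlinarith

theorem sub_one_div_sub_eq_div_supersetCount {n k : ℕ} (hk : 1 ≤ k) (hkn : k < n) :
    ((n : ℝ) - 1) / (n - k)
      = supersetCount n k 1 / ((supersetCount n k 1 : ℝ) - supersetCount n k 2) := by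
  have hkn' : (k : ℝ) + 1 ≤ n := by exact_mod_cast hkn
  rw [div_eq_div_iff (by linarith) (sub_pos.mpr (supersetCount_two_lt_one hk hkn)).ne']
  linarith [supersetCount_one_sub_two_mul (n := n) (k := k) hkn.le]

theorem twelve_mul_supersetCount_three_le {n k : ℕ} (hk : 1 ≤ k) (hn : 2 * k + 1 ≤ n) :
    12 * (supersetCount n k 3 : ℝ) ≤ 7 * supersetCount n k 2 := by
  have h := supersetCount_succ_mul (by omega : k ≤ n) 2
  have hn' : (2 * k + 1 : ℝ) ≤ n := by exact_mod_cast hn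
  have hk' : (1 : ℝ) ≤ k := by exact_mod_cast hk
  have hc : (0 : ℝ) ≤ supersetCount n k 2 := Nat.cast_nonneg _
  push_cast at h
  have key : 0 ≤ (7 * (supersetCount n k 2 : ℝ) - 12 * supersetCount n k 3) * (n - 2) := by
    nlinarith
  exact sub_nonneg.mp (nonneg_of_mul_nonneg_left key (by linarith))

theorem choose_mul_supersetCount_two_sub_three_le {n k : ℕ} (hk : 1 ≤ k) (hn : 2 * k + 1 ≤ n) :
    (n.choose k : ℝ) * (supersetCount n k 2 - supersetCount n k 3) ≤ supersetCount n k 1 ^ 2 := by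
  have h₀ := supersetCount_succ_mul (by omega : k ≤ n) 0
  have h₁ := supersetCount_succ_mul (by omega : k ≤ n) 1
  have h₂ := supersetCount_succ_mul (by omega : k ≤ n) 2
  rw [supersetCount_zero] at h₀
  have hn' : (2 * k + 1 : ℝ) ≤ n := by exact_mod_cast hn
  have hk' : (1 : ℝ) ≤ k := by exact_mod_cast hk
  push_cast at h₀ h₁ h₂
  set N : ℝ := ((n.choose k : ℕ) : ℝ)
  set c₁ : ℝ := ((supersetCount n k 1 : ℕ) : ℝ)
  set c₂ : ℝ := ((supersetCount n k 2 : ℕ) : ℝ)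
  set c₃ : ℝ := ((supersetCount n k 3 : ℕ) : ℝ)
  have hP : 0 < (k : ℝ) * (n - 1) * (n - 2) := by
    apply mul_pos (mul_pos _ _) _ <;> linarith
  have hprod : N * (c₂ - c₃) * (k * (n - 1) * (n - 2)) = c₁ ^ 2 * (n * (k - 1) * (n - k)) := by
    linear_combination (-N * k * (n - 1)) * h₂ + (N * k * (n - k)) * h₁
      + (-c₁ * (k - 1) * (n - k)) * h₀
  -- The difference is `n (n + k² - 4k) + 2k`, and `n + k² - 4k ≥ (k - 1)²` as `n ≥ 2k + 1`.
  have hpoly : (n : ℝ) * (k - 1) * (n - k) ≤ k * (n - 1) * (n - 2) := by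
    nlinarith [sq_nonneg ((k : ℝ) - 1)]
  refine le_of_mul_le_mul_right ?_ hP
  rw [hprod]
  exact mul_le_mul_of_nonneg_left hpoly (sq_nonneg c₁)

theorem card_filter_subset_eq_supersetCount {ι : Type*} [Fintype ι] [DecidableEq ι] (k : ℕ)
    (S : Finset ι) :
    #{A : {A : Finset ι // #A = k} | S ⊆ A.1} = supersetCount (Fintype.card ι) k #S := by
  unfold supersetCount
  split_ifs with h
  · rw [← card_univ, ← card_sdiff_of_subset (subset_univ S), ← card_powersetCard]
    refine card_bij (fun A _ => A.1 \ S) ?_ ?_ ?_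
    · intro A hA
      simp only [mem_filter, mem_univ, true_and] at hA
      rw [mem_powersetCard, card_sdiff_of_subset hA, A.2]
      exact ⟨sdiff_subset_sdiff (subset_univ _) le_rfl, rfl⟩
    · intro A hA B hB hAB
      simp only [mem_filter, mem_univ, true_and] at hA hB
      rw [Subtype.ext_iff, ← sdiff_union_of_subset hA, ← sdiff_union_of_subset hB, hAB]
    · intro B hB
      obtain ⟨hBS, hBcard⟩ := mem_powersetCard.mp hB
      have hdisj : Disjoint B S := (subset_sdiff.mp hBS).2
      refine ⟨⟨B ∪ S, by rw [card_union_of_disjoint hdisj, hBcard]; omega⟩, ?_, ?_⟩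
      · simp
      · simp [union_sdiff_right, hdisj]
  · refine card_eq_zero.mpr (filter_eq_empty_iff.mpr fun A _ hSA => h ?_)
    exact A.2 ▸ card_le_card hSA

theorem sum_pow_four_le_card_pow_mul_sum {α : Type*} [Fintype α] (s : Finset α) (f : α → ℝ) :
    (∑ x ∈ s, f x) ^ 4 ≤ (#s : ℝ) ^ 3 * ∑ x, f x ^ 4 := by
  have h₁ := sq_sum_le_card_mul_sum_sq (s := s) (f := f)
  have h₂ := sq_sum_le_card_mul_sum_sq (s := s) (f := fun x => f x ^ 2)
  have h₃ : ∑ x ∈ s, (f x ^ 2) ^ 2 ≤ ∑ x, f x ^ 4 := by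
    simp_rw [← pow_mul]
    exact sum_le_sum_of_subset_of_nonneg (subset_univ s) fun x _ _ => even_two_mul 2 |>.pow_nonneg _
  calc (∑ x ∈ s, f x) ^ 4 = ((∑ x ∈ s, f x) ^ 2) ^ 2 := by ring
    _ ≤ (#s * ∑ x ∈ s, f x ^ 2) ^ 2 := pow_le_pow_left₀ (sq_nonneg _) h₁ 2
    _ = #s ^ 2 * (∑ x ∈ s, f x ^ 2) ^ 2 := by ring
    _ ≤ #s ^ 2 * (#s * ∑ x, f x ^ 4) := by gcongr; exact h₂.trans (by gcongr)
    _ = #s ^ 3 * ∑ x, f x ^ 4 := by ring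

theorem eq_zero_of_mem_span_of_sum_mul_eq_zero {α β : Type*} [Fintype α] {φ : β → α → ℝ}
    {v : α → ℝ} (hv : v ∈ Submodule.span ℝ (Set.range φ)) (horth : ∀ i, ∑ a, v a * φ i a = 0) :
    v = 0 := by
  have hspan : ∀ w ∈ Submodule.span ℝ (Set.range φ), ∑ a, v a * w a = 0 := by
    intro w hw
    induction hw using Submodule.span_induction with
    | mem w hw => obtain ⟨i, rfl⟩ := hw; exact horth i
    | zero => simp
    | add w₁ w₂ _ _ h₁ h₂ => simp [mul_add, sum_add_distrib, h₁, h₂]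
    | smul r w _ h => simp [mul_left_comm _ r, ← mul_sum, h]
  funext a
  exact mul_self_eq_zero.mp ((sum_eq_zero_iff_of_nonneg fun a _ => mul_self_nonneg (v a)).mp
    (hspan v hv) a (mem_univ a))

theorem abs_sub_le_of_isGreatest {ι : Type*} [Fintype ι] [Nonempty ι] {γ : ι → ℝ} {α γmax : ℝ}
    (hγ : ∀ i, 0 ≤ γ i) (hα : 0 ≤ α) (hsum : ∑ i, (γ i - α) = 0)
    (hmax : IsGreatest (Set.range γ) γmax) (i : ι) : |γ i - α| ≤ γmax := by
  obtain ⟨j, -, hj⟩ := exists_le_of_sum_le univ_nonempty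
    (show ∑ _ : ι, (0 : ℝ) ≤ ∑ i, (γ i - α) by simp [hsum])
  have hi := hmax.2 ⟨i, rfl⟩
  have hj' := hmax.2 ⟨j, rfl⟩
  rw [abs_le]
  constructor <;> linarith [hγ i]

theorem cube_le_of_pow_four_le {m N c δ S γ α η : ℝ} (hm : 0 < m) (hN : 0 < N) (hc : 0 < c)
    (hδ : 0 < δ) (hS : 0 ≤ S) (hα : α = m / N) (hη : η * m = δ⁻¹ * S)
    (h : S ^ 4 ≤ m ^ 3 * (3 * (c ^ 2 / N) * S ^ 2 + c * (c * γ) ^ 2 * S)) :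
    η ^ 3 ≤ (c / δ) ^ 3 * γ ^ 2 + 3 * (c / δ) ^ 2 * η * α := by
  set u := S / (c * m)
  have hu : 0 ≤ u := by positivity
  have hSu : S = u * (c * m) := by simp only [u]; field_simp
  have hηu : η = c / δ * u := by
    have hη' : η * m * δ = S := by rw [hη]; field_simp
    simp only [u]; field_simp; linear_combination hη'
  have hu4 : (c * m) ^ 4 * u ^ 4 ≤ (c * m) ^ 4 * (u * (γ ^ 2 + 3 * α * u)) := by
    rw [hSu] at h
    rw [hα]
    convert h using 1
    · ring
    · field_simp
      ring
  have hu3 : u ^ 3 ≤ γ ^ 2 + 3 * α * u := by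
    have hu4' := le_of_mul_le_mul_left hu4 (by positivity)
    rcases hu.eq_or_lt with hu0 | hupos
    · rw [← hu0]; simpa using sq_nonneg γ
    · nlinarith
  calc η ^ 3 = (c / δ) ^ 3 * u ^ 3 := by rw [hηu]; ring
    _ ≤ (c / δ) ^ 3 * (γ ^ 2 + 3 * α * u) := by gcongr
    _ = _ := by rw [hηu]; ring

section Slice

variable {ι : Type*} [Fintype ι] [DecidableEq ι] (d : ι → ℝ) (k : ℕ)

local notation:max "𝔠" r:arg => (supersetCount (Fintype.card ι) k r : ℝ)

def sliceMoment (p : ℕ) (T : Finset ι) : ℝ :=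
  ∑ A : {A : Finset ι // #A = k}, if T ⊆ A.1 then (∑ i ∈ A.1, d i) ^ p else 0

theorem sliceMoment_zero (T : Finset ι) : sliceMoment d k 0 T = 𝔠 #T := by
  simp [sliceMoment, ← card_filter_subset_eq_supersetCount]

theorem sliceMoment_succ (p : ℕ) (T : Finset ι) :
    sliceMoment d k (p + 1) T = ∑ i, d i * sliceMoment d k p (insert i T) := by
  simp_rw [sliceMoment, mul_sum]
  rw [sum_comm]
  refine sum_congr rfl fun A _ => ?_
  by_cases hT : T ⊆ A.1
  · simp [insert_subset_iff, hT, pow_succ', sum_mul]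
  · simp [insert_subset_iff, hT]

theorem sum_mul_insert (H : Finset ι → ℝ) (T : Finset ι) :
    ∑ i, d i * H (insert i T) = (∑ i ∈ T, d i) * H T + ∑ i ∈ Tᶜ, d i * H (insert i T) := by
  rw [← sum_add_sum_compl T, sum_mul]
  congr 1
  exact sum_congr rfl fun i hi => by rw [insert_eq_of_mem hi]

variable {d k}

theorem sum_compl_eq_neg (hd : ∑ i, d i = 0) (T : Finset ι) :
    ∑ i ∈ Tᶜ, d i = -∑ i ∈ T, d i := by
  rw [eq_neg_iff_add_eq_zero, add_comm, sum_add_sum_compl, hd]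

theorem sliceMoment_one (hd : ∑ i, d i = 0) (T : Finset ι) :
    sliceMoment d k 1 T = (𝔠 #T - 𝔠 (#T + 1)) * ∑ i ∈ T, d i := by
  rw [sliceMoment_succ, sum_mul_insert]
  have hcompl : ∑ i ∈ Tᶜ, d i * sliceMoment d k 0 (insert i T) = 𝔠 (#T + 1) * ∑ i ∈ Tᶜ, d i := by
    rw [mul_sum]
    refine sum_congr rfl fun i hi => ?_
    rw [sliceMoment_zero, card_insert_of_notMem (mem_compl.mp hi), mul_comm]
  rw [hcompl, sum_compl_eq_neg hd, sliceMoment_zero]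
  ring

theorem sliceMoment_two (hd : ∑ i, d i = 0) (T : Finset ι) :
    sliceMoment d k 2 T = (𝔠 #T - 𝔠 (#T + 1)) * (∑ i ∈ T, d i) ^ 2
      + (𝔠 (#T + 1) - 𝔠 (#T + 2)) * (∑ i ∈ Tᶜ, d i ^ 2 - (∑ i ∈ T, d i) ^ 2) := by
  rw [sliceMoment_succ, sum_mul_insert]
  have hcompl : ∑ i ∈ Tᶜ, d i * sliceMoment d k 1 (insert i T)
      = (𝔠 (#T + 1) - 𝔠 (#T + 2)) * (∑ i ∈ Tᶜ, d i ^ 2 + (∑ i ∈ T, d i) * ∑ i ∈ Tᶜ, d i) := by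
    rw [mul_add, mul_sum, mul_sum, mul_sum, ← sum_add_distrib]
    refine sum_congr rfl fun i hi => ?_
    rw [sliceMoment_one hd, card_insert_of_notMem (mem_compl.mp hi),
      sum_insert (mem_compl.mp hi)]
    ring
  rw [hcompl, sum_compl_eq_neg hd, sliceMoment_one hd]
  ring

theorem sliceMoment_three (hd : ∑ i, d i = 0) (T : Finset ι) :
    sliceMoment d k 3 T = (∑ i ∈ T, d i) * sliceMoment d k 2 T
      + (𝔠 (#T + 1) - 𝔠 (#T + 2)) * (∑ i ∈ Tᶜ, d i ^ 3
          + 2 * (∑ i ∈ T, d i) * ∑ i ∈ Tᶜ, d i ^ 2 - (∑ i ∈ T, d i) ^ 3)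
      + (𝔠 (#T + 2) - 𝔠 (#T + 3)) * ((∑ i ∈ T, d i) ^ 3
          - 3 * (∑ i ∈ T, d i) * ∑ i ∈ Tᶜ, d i ^ 2 - 2 * ∑ i ∈ Tᶜ, d i ^ 3) := by
  rw [sliceMoment_succ, sum_mul_insert]
  set σ := ∑ i ∈ T, d i
  set q := ∑ i ∈ Tᶜ, d i ^ 2
  have hcompl : ∑ i ∈ Tᶜ, d i * sliceMoment d k 2 (insert i T)
      = ∑ i ∈ Tᶜ, (((𝔠 (#T + 1) - 𝔠 (#T + 2)) * σ ^ 2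
            + (𝔠 (#T + 2) - 𝔠 (#T + 3)) * (q - σ ^ 2)) * d i
          + 2 * σ * ((𝔠 (#T + 1) - 𝔠 (#T + 2)) - (𝔠 (#T + 2) - 𝔠 (#T + 3))) * d i ^ 2
          + ((𝔠 (#T + 1) - 𝔠 (#T + 2)) - 2 * (𝔠 (#T + 2) - 𝔠 (#T + 3))) * d i ^ 3) := by
    refine sum_congr rfl fun i hi => ?_
    have hiT : i ∉ T := mem_compl.mp hi
    have hq : ∑ j ∈ (insert i T)ᶜ, d j ^ 2 = q - d i ^ 2 := by
      rw [compl_insert, sum_erase_eq_sub hi]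
    rw [sliceMoment_two hd, card_insert_of_notMem hiT, sum_insert hiT, hq]
    ring
  rw [hcompl, sum_add_distrib, sum_add_distrib, ← mul_sum, ← mul_sum, ← mul_sum,
    sum_compl_eq_neg hd]
  ring

theorem sum_sum_mem_sq (hd : ∑ i, d i = 0) :
    ∑ A : {A : Finset ι // #A = k}, (∑ i ∈ A.1, d i) ^ 2 = (𝔠 1 - 𝔠 2) * ∑ i, d i ^ 2 := by
  simpa [sliceMoment] using sliceMoment_two (k := k) hd ∅

theorem sum_pow_four_eq (hd : ∑ i, d i = 0) :
    ∑ A : {A : Finset ι // #A = k}, (∑ i ∈ A.1, d i) ^ 4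
      = 3 * (𝔠 2 - 2 * 𝔠 3 + 𝔠 4) * (∑ i, d i ^ 2) ^ 2
        + (𝔠 1 - 7 * 𝔠 2 + 12 * 𝔠 3 - 6 * 𝔠 4) * ∑ i, d i ^ 4 := by
  set Q := ∑ i, d i ^ 2
  have hcompl : ∀ (p : ℕ) (i : ι), ∑ j ∈ {i}ᶜ, d j ^ p = ∑ j, d j ^ p - d i ^ p := fun p i => by
    rw [eq_sub_iff_add_eq, add_comm, ← sum_singleton (fun j => d j ^ p) i, sum_add_sum_compl]
  have h := sliceMoment_succ d k 3 ∅
  simp only [sliceMoment, empty_subset, if_true] at h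
  rw [h]
  calc ∑ i, d i * sliceMoment d k 3 (insert i ∅)
      = ∑ i, (3 * (𝔠 2 - 2 * 𝔠 3 + 𝔠 4) * Q * d i ^ 2
          + ((𝔠 2 - 𝔠 3) - 2 * (𝔠 3 - 𝔠 4)) * (∑ j, d j ^ 3) * d i
          + (𝔠 1 - 7 * 𝔠 2 + 12 * 𝔠 3 - 6 * 𝔠 4) * d i ^ 4) := by
        refine sum_congr rfl fun i _ => ?_
        rw [insert_empty, sliceMoment_three hd, sliceMoment_two hd]
        simp only [card_singleton, sum_singleton, hcompl]
        ring
    _ = _ := by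
        rw [sum_add_distrib, sum_add_distrib, ← mul_sum, ← mul_sum, ← mul_sum, hd]
        ring

theorem sum_pow_four_le (hk : 1 ≤ k) (hn : 2 * k + 1 ≤ Fintype.card ι) (hd : ∑ i, d i = 0) :
    ∑ A : {A : Finset ι // #A = k}, (∑ i ∈ A.1, d i) ^ 4
      ≤ 3 * (𝔠 1 ^ 2 / (Fintype.card ι).choose k) * (∑ i, d i ^ 2) ^ 2 + 𝔠 1 * ∑ i, d i ^ 4 := by
  rw [sum_pow_four_eq hd]
  have hN : (0 : ℝ) < (Fintype.card ι).choose k := by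
    exact_mod_cast Nat.choose_pos (by omega)
  have h₄₃ : 𝔠 4 ≤ 𝔠 3 := by exact_mod_cast supersetCount_succ_le (by omega) 3
  have h₂₃ : 𝔠 2 - 𝔠 3 ≤ 𝔠 1 ^ 2 / (Fintype.card ι).choose k := by
    rw [le_div_iff₀ hN, mul_comm]
    exact choose_mul_supersetCount_two_sub_three_le hk hn
  have h₃₂ := twelve_mul_supersetCount_three_le hk hn
  have h₄ : 0 ≤ 𝔠 4 := Nat.cast_nonneg _
  gcongr ?_ * _ + ?_
  · linarith
  · exact mul_le_mul_of_nonneg_right (by linarith) (by positivity)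

noncomputable def sliceLinear (k : ℕ) (i : ι) (A : {A : Finset ι // #A = k}) : ℝ :=
  (if i ∈ A.1 then 1 else 0) - k / Fintype.card ι

theorem sum_mul_sliceLinear {a : ι → ℝ} (ha : ∑ i, a i = 0) (A : {A : Finset ι // #A = k}) :
    ∑ i, a i * sliceLinear k i A = ∑ i ∈ A.1, a i := by
  simp [sliceLinear, mul_sub, sum_sub_distrib, ← sum_mul, ha]

theorem sum_sliceLinear (hι : Fintype.card ι ≠ 0) (A : {A : Finset ι // #A = k}) :
    ∑ i, sliceLinear k i A = 0 := by
  simp only [sliceLinear, sum_sub_distrib, sum_ite_mem, univ_inter, sum_const, A.2, nsmul_eq_mul,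
    mul_one, card_univ]
  field_simp
  ring

theorem sum_sum_mem_mul_sliceLinear {a : ι → ℝ} (ha : ∑ i, a i = 0) (j : ι) :
    ∑ A : {A : Finset ι // #A = k}, (∑ i ∈ A.1, a i) * sliceLinear k j A
      = (𝔠 1 - 𝔠 2) * a j := by
  have h₁ := sliceMoment_one (k := k) ha {j}
  have h₀ := sliceMoment_one (k := k) ha ∅
  simp only [sliceMoment, singleton_subset_iff, empty_subset, if_true, pow_one, card_singleton,
    sum_singleton, sum_empty, mul_zero] at h₁ h₀
  simp only [sliceLinear, mul_sub, mul_ite, mul_one, mul_zero, sum_sub_distrib, ← sum_mul, h₀,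
    h₁]
  ring

theorem sum_mul_sum_mem_eq_sum_sq {f : {A : Finset ι // #A = k} → ℝ} {a : ι → ℝ}
    (hfa : ∀ i, ∑ A, f A * sliceLinear k i A = a i) (ha : ∑ i, a i = 0) :
    ∑ A, f A * ∑ i ∈ A.1, a i = ∑ i, a i ^ 2 := by
  simp_rw [← sum_mul_sliceLinear ha, mul_sum]
  rw [sum_comm]
  refine sum_congr rfl fun i _ => ?_
  simp_rw [mul_left_comm (f _), ← mul_sum, hfa i, sq]

theorem sum_eq_zero_of_forall_sum_mul_sliceLinear_eq (hι : Fintype.card ι ≠ 0)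
    {f : {A : Finset ι // #A = k} → ℝ} {a : ι → ℝ}
    (hfa : ∀ i, ∑ A, f A * sliceLinear k i A = a i) : ∑ i, a i = 0 := by
  simp_rw [← hfa]
  rw [sum_comm]
  simp [← mul_sum, sum_sliceLinear hι]

theorem sum_indicator_mul_sliceLinear (hk : 1 ≤ k) (hkι : k ≤ Fintype.card ι)
    (F : Finset {A : Finset ι // #A = k}) (i : ι) :
    ∑ A, (if A ∈ F then (1 : ℝ) else 0) * sliceLinear k i A
      = ((Fintype.card ι - 1).choose (k - 1) : ℝ)
        * (#{A ∈ F | i ∈ A.1} / ((Fintype.card ι - 1).choose (k - 1) : ℝ)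
          - #F / ((Fintype.card ι).choose k : ℝ)) := by
  have hkN := supersetCount_succ_mul (n := Fintype.card ι) hkι 0
  rw [supersetCount_one hk, supersetCount_zero] at hkN
  have hc : ((Fintype.card ι - 1).choose (k - 1) : ℝ) ≠ 0 := by
    exact_mod_cast (Nat.choose_pos (by omega)).ne'
  have hN : ((Fintype.card ι).choose k : ℝ) ≠ 0 := by exact_mod_cast (Nat.choose_pos hkι).ne'
  have hι : (Fintype.card ι : ℝ) ≠ 0 := by
    have : (1 : ℝ) ≤ Fintype.card ι := by exact_mod_cast (show 1 ≤ Fintype.card ι by omega)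
    linarith
  simp only [sliceLinear, mul_comm, mul_ite, one_mul, zero_mul, sum_ite_mem, univ_inter,
    sum_sub_distrib, sum_boole, sum_const, nsmul_eq_mul]
  field_simp
  push_cast at hkN
  linear_combination (#F : ℝ) * hkN

def IsSliceLinearProjection (f f₁ : {A : Finset ι // #A = k} → ℝ) : Prop :=
  f₁ ∈ Submodule.span ℝ (Set.range (sliceLinear k))
    ∧ ∀ j, ∑ A, (f A - f₁ A) * sliceLinear k j A = 0

theorem IsSliceLinearProjection.eq_sum_mem {f f₁ : {A : Finset ι // #A = k} → ℝ} {a : ι → ℝ}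
    (hproj : IsSliceLinearProjection f f₁) (ha : ∑ i, a i = 0)
    (hfa : ∀ j, ∑ A, f A * sliceLinear k j A = (𝔠 1 - 𝔠 2) * a j) :
    f₁ = fun A => ∑ i ∈ A.1, a i := by
  have hmem : (fun A : {A : Finset ι // #A = k} => ∑ i ∈ A.1, a i)
      ∈ Submodule.span ℝ (Set.range (sliceLinear k)) := by
    have : (fun A : {A : Finset ι // #A = k} => ∑ i ∈ A.1, a i) = ∑ i, a i • sliceLinear k i := by
      funext A
      simp [← sum_mul_sliceLinear ha A]
    rw [this]
    exact Submodule.sum_mem _ fun i _ =>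
      Submodule.smul_mem _ _ (Submodule.subset_span (Set.mem_range_self i))
  refine sub_eq_zero.mp (eq_zero_of_mem_span_of_sum_mul_eq_zero (Submodule.sub_mem _ hproj.1 hmem)
    fun j => ?_)
  have h := sum_sum_mem_mul_sliceLinear (k := k) ha j
  calc ∑ A, (f₁ - fun A : {A : Finset ι // #A = k} => ∑ i ∈ A.1, a i) A * sliceLinear k j A
      = ∑ A, f A * sliceLinear k j A - ∑ A, (f A - f₁ A) * sliceLinear k j A
          - ∑ A : {A : Finset ι // #A = k}, (∑ i ∈ A.1, a i) * sliceLinear k j A := by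
        rw [← sum_sub_distrib, ← sum_sub_distrib]
        exact sum_congr rfl fun A _ => by simp only [Pi.sub_apply]; ring
    _ = 0 := by rw [hfa j, hproj.2 j, h]; ring

theorem IsSliceLinearProjection.sum_sq_eq {f f₁ : {A : Finset ι // #A = k} → ℝ} {a : ι → ℝ}
    (hproj : IsSliceLinearProjection f f₁) (hk : 1 ≤ k) (hkι : k < Fintype.card ι)
    (hfa : ∀ i, ∑ A, f A * sliceLinear k i A = a i) :
    ∑ A, f₁ A ^ 2 = (𝔠 1 - 𝔠 2)⁻¹ * ∑ i, a i ^ 2 := by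
  have hδ : 𝔠 1 - 𝔠 2 ≠ 0 := (sub_pos.mpr (supersetCount_two_lt_one hk hkι)).ne'
  have ha := sum_eq_zero_of_forall_sum_mul_sliceLinear_eq (by omega) hfa
  have hf₁ := hproj.eq_sum_mem (a := fun i => (𝔠 1 - 𝔠 2)⁻¹ * a i)
    (by rw [← mul_sum, ha, mul_zero]) fun j => by rw [hfa, ← mul_assoc, mul_inv_cancel₀ hδ, one_mul]
  simp_rw [hf₁, ← mul_sum, mul_pow, ← mul_sum, sum_sum_mem_sq ha]
  field_simp

theorem sum_sq_pow_four_le (hk : 1 ≤ k) (hn : 2 * k + 1 ≤ Fintype.card ι)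
    (F : Finset {A : Finset ι // #A = k}) {a : ι → ℝ}
    (hfa : ∀ i, ∑ A, (if A ∈ F then (1 : ℝ) else 0) * sliceLinear k i A = a i)
    {M : ℝ} (hM : ∀ i, |a i| ≤ M) :
    (∑ i, a i ^ 2) ^ 4 ≤ (#F : ℝ) ^ 3
      * (3 * (𝔠 1 ^ 2 / (Fintype.card ι).choose k) * (∑ i, a i ^ 2) ^ 2
        + 𝔠 1 * M ^ 2 * ∑ i, a i ^ 2) := by
  have ha := sum_eq_zero_of_forall_sum_mul_sliceLinear_eq (by omega) hfa
  have hFa : ∑ A ∈ F, ∑ i ∈ A.1, a i = ∑ i, a i ^ 2 := by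
    simpa [ite_mul, sum_ite_mem] using sum_mul_sum_mem_eq_sum_sq hfa ha
  have h₄₂ : ∑ i, a i ^ 4 ≤ M ^ 2 * ∑ i, a i ^ 2 := by
    rw [mul_sum]
    refine sum_le_sum fun i _ => ?_
    have : a i ^ 2 ≤ M ^ 2 := sq_le_sq' (abs_le.mp (hM i)).1 (abs_le.mp (hM i)).2
    nlinarith [sq_nonneg (a i)]
  have hmoment : ∑ A : {A : Finset ι // #A = k}, (∑ i ∈ A.1, a i) ^ 4
      ≤ 3 * (𝔠 1 ^ 2 / (Fintype.card ι).choose k) * (∑ i, a i ^ 2) ^ 2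
        + 𝔠 1 * M ^ 2 * ∑ i, a i ^ 2 := by
    refine (sum_pow_four_le hk hn ha).trans ?_
    rw [mul_assoc (𝔠 1)]
    gcongr
  calc (∑ i, a i ^ 2) ^ 4 = (∑ A ∈ F, ∑ i ∈ A.1, a i) ^ 4 := by rw [hFa]
    _ ≤ (#F : ℝ) ^ 3 * ∑ A : {A : Finset ι // #A = k}, (∑ i ∈ A.1, a i) ^ 4 :=
      sum_pow_four_le_card_pow_mul_sum F fun A => ∑ i ∈ A.1, a i
    _ ≤ _ := mul_le_mul_of_nonneg_left hmoment (by positivity)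

end Slice

/-- Lemma `gammamax`: for a nonempty family `F` of `k`-subsets of `[n]` with indicator `f`,
density `α`, and `f₁` the orthogonal projection of `f` onto the span of the functions
`A ↦ 1_{i ∈ A} - k/n`, with `η = ‖f₁‖²/‖f‖²` and star-densities `γ i` with maximum
`γmax`, one has `η³ ≤ ((n-1)/(n-k))³·γmax² + 3·((n-1)/(n-k))²·η·α`. -/
theorem stmt_10 (n k : ℕ) (hn : 2 * k + 1 ≤ n) (hk : 1 ≤ k)
    (F : Finset {A : Finset (Fin n) // A.card = k}) (hF : F.Nonempty)
    (α : ℝ) (hα : α = (F.card : ℝ) / (n.choose k : ℝ))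
    (f : {A : Finset (Fin n) // A.card = k} → ℝ)
    (hf : f = fun A => if A ∈ F then (1 : ℝ) else 0)
    (φ : Fin n → {A : Finset (Fin n) // A.card = k} → ℝ)
    (hφ : φ = fun i A => (if i ∈ A.val then (1 : ℝ) else 0) - (k : ℝ) / n)
    (f₁ : {A : Finset (Fin n) // A.card = k} → ℝ)
    (hf₁mem : f₁ ∈ Submodule.span ℝ (Set.range φ))
    (hf₁orth : ∀ i : Fin n, ∑ A, (f A - f₁ A) * φ i A = 0)
    (η : ℝ) (hη : η * ∑ A, (f A) ^ 2 = ∑ A, (f₁ A) ^ 2)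
    (γ : Fin n → ℝ)
    (hγ : γ = fun i => ((F.filter (fun A => i ∈ A.val)).card : ℝ) / ((n - 1).choose (k - 1) : ℝ))
    (γmax : ℝ) (hγmax : IsGreatest (Set.range γ) γmax) :
    η ^ 3 ≤ (((n : ℝ) - 1) / ((n : ℝ) - k)) ^ 3 * γmax ^ 2
        + 3 * (((n : ℝ) - 1) / ((n : ℝ) - k)) ^ 2 * η * α := by
  classical
  have hι : 2 * k + 1 ≤ Fintype.card (Fin n) := by simpa using hn
  have hφ' : φ = sliceLinear k := by subst hφ; funext i A; simp [sliceLinear]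
  have hproj : IsSliceLinearProjection f f₁ := ⟨hφ' ▸ hf₁mem, hφ' ▸ hf₁orth⟩
  have hc : (0 : ℝ) < (n - 1).choose (k - 1) := by exact_mod_cast Nat.choose_pos (by omega)
  have hfa (i : Fin n) : ∑ A, f A * sliceLinear k i A = (n - 1).choose (k - 1) * (γ i - α) := by
    simpa [hf, hγ, hα] using sum_indicator_mul_sliceLinear hk (by simp; omega) F i
  have hsum : ∑ i, (γ i - α) = 0 := by
    simpa [← mul_sum, hc.ne'] using
      sum_eq_zero_of_forall_sum_mul_sliceLinear_eq (by simp; omega) hfa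
  have hM (i : Fin n) : |(n - 1).choose (k - 1) * (γ i - α)| ≤ (n - 1).choose (k - 1) * γmax := by
    have : NeZero n := ⟨by omega⟩
    rw [abs_mul, abs_of_pos hc]
    exact mul_le_mul_of_nonneg_left (abs_sub_le_of_isGreatest (fun i => by rw [hγ]; positivity)
      (by rw [hα]; positivity) hsum hγmax i) hc.le
  have h₂ := hproj.sum_sq_eq hk (by simp; omega) hfa
  have h₄ := sum_sq_pow_four_le hk hι F (by subst hf; exact hfa) hM
  have hδ := supersetCount_two_lt_one (n := n) hk (by omega)
  rw [sub_one_div_sub_eq_div_supersetCount hk (by omega)]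
  simp only [Fintype.card_fin, supersetCount_one hk] at h₂ h₄ hδ ⊢
  exact cube_le_of_pow_four_le (by exact_mod_cast hF.card_pos)
    (by exact_mod_cast Nat.choose_pos (by omega)) hc (sub_pos.mpr hδ) (by positivity) hα
    (by rw [← h₂, ← hη]; simp [hf]) h₄
end
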